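/- Completeness of the SHIQ tableaux algorithm: if a SHIQ-concept D in negation normal form has a tableau with respect to a role hierarchy R⁺, then the expansion rules can be applied to the initial completion tree for D in such a way that they yield a complete and clash-free completion tree. -/

import Mathlib

/-- SHIQ-roles: role names (indexed by ℕ) and their inverses. -/
inductive Role where
  | atom : ℕ → Role
  | inv  : ℕ → Role
deriving DecidableEq

/-- The function `Inv` on roles: `Inv(R) = R⁻`, `Inv(R⁻) = R`. -/
def Role.Inv : Role → Role
  | .atom r => .inv r
  | .inv r  => .atom r

/-- The underlying role name of a (possibly inverse) role. -/
def Role.name : Role → ℕ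
  | .atom r => r
  | .inv r  => r

/-- Concepts of the SHIQ family (with ⊤ and ⊥ for convenience). -/
inductive DLConcept where
  | top : DLConcept
  | bot : DLConcept
  | atom : ℕ → DLConcept
  | neg : DLConcept → DLConcept
  | and : DLConcept → DLConcept → DLConcept
  | or : DLConcept → DLConcept → DLConcept
  | all : Role → DLConcept → DLConcept
  | ex : Role → DLConcept → DLConcept
  | atleast : ℕ → Role → DLConcept → DLConcept
  | atmost : ℕ → Role → DLConcept → DLConcept
deriving DecidableEq

/-- An interpretation: a (nonempty) domain, a valuation of concept names and
    of role names. -/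
structure Interp where
  Dom : Type
  dom_nonempty : Nonempty Dom
  cI : ℕ → Set Dom
  rI : ℕ → Dom → Dom → Prop

/-- Semantics of (possibly inverse) roles. -/
def Interp.rSem (I : Interp) : Role → I.Dom → I.Dom → Prop
  | .atom r => I.rI r
  | .inv r  => fun x y => I.rI r y x

/-- Semantics of concepts; number restrictions are interpreted by counting
    role successors (via cardinalities, so that infinite sets are handled
    correctly). -/
def Interp.cSem (I : Interp) : DLConcept → Set I.Dom
  | .top => Set.univ
  | .bot => ∅
  | .atom a => I.cI a
  | .neg C => (I.cSem C)ᶜ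
  | .and C D => I.cSem C ∩ I.cSem D
  | .or C D => I.cSem C ∪ I.cSem D
  | .all R C => {x | ∀ y, I.rSem R x y → y ∈ I.cSem C}
  | .ex R C => {x | ∃ y, I.rSem R x y ∧ y ∈ I.cSem C}
  | .atleast n R C => {x | (n : Cardinal) ≤ Cardinal.mk {y // I.rSem R x y ∧ y ∈ I.cSem C}}
  | .atmost n R C => {x | Cardinal.mk {y // I.rSem R x y ∧ y ∈ I.cSem C} ≤ (n : Cardinal)}

/-- `I.Good Rp`: the interpretation interprets every transitive role name
    (member of `Rp`) by a transitive relation. -/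
def Interp.Good (I : Interp) (Rp : Set ℕ) : Prop :=
  ∀ r ∈ Rp, Transitive (I.rI r)

/-- The role hierarchy ⊑* generated by a finite set of role inclusion axioms:
    inverses are added and the transitive-reflexive closure is taken. -/
def SubRole (RIA : List (Role × Role)) : Role → Role → Prop :=
  Relation.ReflTransGen (fun R S => (R, S) ∈ RIA ∨ (R.Inv, S.Inv) ∈ RIA)

/-- `I ⊨ R⁺`: the interpretation satisfies the role hierarchy. -/
def Interp.ModelsRH (I : Interp) (RIA : List (Role × Role)) : Prop :=
  ∀ R S, SubRole RIA R S → ∀ x y, I.rSem R x y → I.rSem S x y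

/-- `Trans(R)`: a (possibly inverse) role is transitive iff its name is in `Rp`. -/
def RTrans (Rp : Set ℕ) : Role → Prop
  | .atom r => r ∈ Rp
  | .inv r  => r ∈ Rp

/-- A role is simple iff it is neither transitive nor has a transitive sub-role. -/
def SimpleRole (Rp : Set ℕ) (RIA : List (Role × Role)) (R : Role) : Prop :=
  ∀ S, SubRole RIA S R → ¬ RTrans Rp S

/-- SHIQ-concepts: number restrictions occur only on simple roles. -/
def DLConcept.IsSHIQ (Rp : Set ℕ) (RIA : List (Role × Role)) : DLConcept → Prop
  | .top | .bot | .atom _ => True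
  | .neg C => C.IsSHIQ Rp RIA
  | .and C D | .or C D => C.IsSHIQ Rp RIA ∧ D.IsSHIQ Rp RIA
  | .all _ C | .ex _ C => C.IsSHIQ Rp RIA
  | .atleast _ R C | .atmost _ R C => SimpleRole Rp RIA R ∧ C.IsSHIQ Rp RIA

/-- Satisfiability of a concept w.r.t. a role hierarchy. -/
def Satisfiable (Rp : Set ℕ) (RIA : List (Role × Role)) (C : DLConcept) : Prop :=
  ∃ I : Interp, I.Good Rp ∧ I.ModelsRH RIA ∧ (I.cSem C).Nonempty

/-- Subsumption of concepts w.r.t. a role hierarchy. -/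
def Subsumes (Rp : Set ℕ) (RIA : List (Role × Role)) (C D : DLConcept) : Prop :=
  ∀ I : Interp, I.Good Rp → I.ModelsRH RIA → I.cSem C ⊆ I.cSem D

/-- Negation normal form: negation occurs only in front of concept names. -/
def DLConcept.IsNNF : DLConcept → Prop
  | .neg (.atom _) => True
  | .neg _ => False
  | .top | .bot | .atom _ => True
  | .and C D | .or C D => C.IsNNF ∧ D.IsNNF
  | .all _ C | .ex _ C => C.IsNNF
  | .atleast _ _ C | .atmost _ _ C => C.IsNNF

/-- `~C`: the negation normal form of `¬C` (for `C` in NNF). -/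
def DLConcept.nnfNeg : DLConcept → DLConcept
  | .top => .bot
  | .bot => .top
  | .atom a => .neg (.atom a)
  | .neg C => C
  | .and C D => .or C.nnfNeg D.nnfNeg
  | .or C D => .and C.nnfNeg D.nnfNeg
  | .all R C => .ex R C.nnfNeg
  | .ex R C => .all R C.nnfNeg
  | .atleast 0 _ _ => .bot
  | .atleast (n+1) R C => .atmost n R C
  | .atmost n R C => .atleast (n + 1) R C

/-- Direct (one-step) subconcepts. -/
inductive DirectSub : DLConcept → DLConcept → Prop
  | neg (C : DLConcept) : DirectSub C (.neg C)
  | andl (C D : DLConcept) : DirectSub C (.and C D)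
  | andr (C D : DLConcept) : DirectSub D (.and C D)
  | orl (C D : DLConcept) : DirectSub C (.or C D)
  | orr (C D : DLConcept) : DirectSub D (.or C D)
  | all (R : Role) (C : DLConcept) : DirectSub C (.all R C)
  | ex (R : Role) (C : DLConcept) : DirectSub C (.ex R C)
  | atleast (n : ℕ) (R : Role) (C : DLConcept) : DirectSub C (.atleast n R C)
  | atmost (n : ℕ) (R : Role) (C : DLConcept) : DirectSub C (.atmost n R C)

/-- `clos(D)`: the smallest set of concepts containing `D` that is closed under
subconcepts and under `~`. -/
inductive InClos (D : DLConcept) : DLConcept → Prop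
  | base : InClos D D
  | sub {C C' : DLConcept} : InClos D C → DirectSub C' C → InClos D C'
  | nnf {C : DLConcept} : InClos D C → InClos D C.nnfNeg

/-- The roles occurring in a concept. -/
def DLConcept.rolesOf : DLConcept → Finset Role
  | .top | .bot | .atom _ => ∅
  | .neg C => C.rolesOf
  | .and C D | .or C D => C.rolesOf ∪ D.rolesOf
  | .all R C | .ex R C => insert R C.rolesOf
  | .atleast _ R C | .atmost _ R C => insert R C.rolesOf

/-- `R_D`: the roles occurring in `D` and in the role hierarchy, together with
their inverses. -/
def RD (D : DLConcept) (RIA : List (Role × Role)) : Finset Role :=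
  let base := D.rolesOf ∪ RIA.foldr (fun p acc => insert p.1 (insert p.2 acc)) ∅
  base ∪ base.image Role.Inv

/-- A tableau `T = (S, L, E)` for a SHIQ-concept `D` in NNF w.r.t. a role hierarchy,
satisfying Properties 1–11 of the tableau definition. -/
structure Tableau (Rp : Set ℕ) (RIA : List (Role × Role)) (D : DLConcept) where
  S : Type
  L : S → Set DLConcept
  E : Role → Set (S × S)
  root : ∃ s, D ∈ L s
  p1 : ∀ s C, C ∈ L s → DLConcept.neg C ∉ L s
  p2 : ∀ s C₁ C₂, DLConcept.and C₁ C₂ ∈ L s → C₁ ∈ L s ∧ C₂ ∈ L s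
  p3 : ∀ s C₁ C₂, DLConcept.or C₁ C₂ ∈ L s → C₁ ∈ L s ∨ C₂ ∈ L s
  p4 : ∀ s t S' C, DLConcept.all S' C ∈ L s → (s, t) ∈ E S' → C ∈ L t
  p5 : ∀ s S' C, DLConcept.ex S' C ∈ L s → ∃ t, (s, t) ∈ E S' ∧ C ∈ L t
  p6 : ∀ s t R S' C, DLConcept.all S' C ∈ L s → SubRole RIA R S' → RTrans Rp R →
        (s, t) ∈ E R → DLConcept.all R C ∈ L t
  p7 : ∀ R x y, (x, y) ∈ E R ↔ (y, x) ∈ E R.Inv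
  p8 : ∀ R S', SubRole RIA R S' → ∀ x y, (x, y) ∈ E R → (x, y) ∈ E S'
  p9 : ∀ s n S' C, DLConcept.atmost n S' C ∈ L s →
        Cardinal.mk {t // (s, t) ∈ E S' ∧ C ∈ L t} ≤ (n : Cardinal)
  p10 : ∀ s n S' C, DLConcept.atleast n S' C ∈ L s →
        (n : Cardinal) ≤ Cardinal.mk {t // (s, t) ∈ E S' ∧ C ∈ L t}
  p11 : ∀ s t n S' C,
        (DLConcept.atleast n S' C ∈ L s ∨ DLConcept.atmost n S' C ∈ L s) →
        (s, t) ∈ E S' → C ∈ L t ∨ C.nnfNeg ∈ L t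

/-- A completion tree for the SHIQ algorithm: a finite tree (nodes named by
natural numbers, each non-root node pointing to its parent) with node labels
`lab x ⊆ clos(D)`, edge labels `elb x` (the label of the edge from
`parent x` to `x`), and a symmetric inequality relation `neq` (`≐̸`). -/
structure CTree where
  nodes : Finset ℕ
  root : ℕ
  parent : ℕ → ℕ
  lab : ℕ → Finset DLConcept
  elb : ℕ → Finset Role
  neq : ℕ → ℕ → Prop
  root_mem : root ∈ nodes
  parent_mem : ∀ x ∈ nodes, x ≠ root → parent x ∈ nodes
  reach : ∀ x ∈ nodes, ∃ k, parent^[k] x = root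
  neq_symm : ∀ x y, neq x y → neq y x

namespace CTree

/-- `y` is a successor of `x`. -/
def Succ (t : CTree) (x y : ℕ) : Prop :=
  y ∈ t.nodes ∧ y ≠ t.root ∧ t.parent y = x

/-- `y` is an `R`-successor of `x` (w.r.t. the role hierarchy generated by `RIA`). -/
def RSucc (RIA : List (Role × Role)) (t : CTree) (R : Role) (x y : ℕ) : Prop :=
  t.Succ x y ∧ ∃ S ∈ t.elb y, SubRole RIA S R

/-- `y` is an `R`-neighbour of `x`. -/
def RNeighb (RIA : List (Role × Role)) (t : CTree) (R : Role) (x y : ℕ) : Prop :=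
  t.RSucc RIA R x y ∨ t.RSucc RIA R.Inv y x

/-- `x` is a (proper) ancestor of `y`. -/
def Anc (t : CTree) (x y : ℕ) : Prop :=
  y ∈ t.nodes ∧ ∃ k, 0 < k ∧ t.parent^[k] y = x ∧ ∀ j < k, t.parent^[j] y ≠ t.root

/-- The depth of a node (the length of the path from the root to it). -/
noncomputable def depth (t : CTree) (x : ℕ) : ℕ :=
  sInf {k | t.parent^[k] x = t.root}

/-- The pair-wise blocking witness condition: `x` has ancestors `x' = parent x`,
`y`, `y' = parent y` with `L(x) = L(y)`, `L(x') = L(y')` and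
`L(⟨x',x⟩) = L(⟨y',y⟩)` (i.e. `y` blocks `x`). -/
def Cand (t : CTree) (x : ℕ) : Prop :=
  x ∈ t.nodes ∧ x ≠ t.root ∧
  ∃ y, t.Anc y x ∧ y ≠ t.root ∧ t.Anc (t.parent y) x ∧
    t.lab x = t.lab y ∧ t.lab (t.parent x) = t.lab (t.parent y) ∧
    t.elb x = t.elb y

/-- A non-root node whose incoming edge label has been emptied by the ≤-rule. -/
def EmptyEdge (t : CTree) (x : ℕ) : Prop :=
  x ∈ t.nodes ∧ x ≠ t.root ∧ t.elb x = ∅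

/-- `x` is blocked (directly or indirectly): some node on the path from the root
to `x` carries a pair-wise blocking witness or an emptied incoming edge. -/
def Blocked (t : CTree) (x : ℕ) : Prop :=
  ∃ z, (z = x ∨ t.Anc z x) ∧ (t.Cand z ∨ t.EmptyEdge z)

/-- `x` is directly blocked: it carries a pair-wise blocking witness and none of
its ancestors is blocked. -/
def DirectlyBlocked (t : CTree) (x : ℕ) : Prop :=
  t.Cand x ∧ ∀ z, t.Anc z x → ¬ t.Blocked z

/-- `x` is indirectly blocked: one of its ancestors is blocked, or `x` is a
successor of a node with an emptied edge label. -/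
def IndirectlyBlocked (t : CTree) (x : ℕ) : Prop :=
  (∃ z, t.Anc z x ∧ t.Blocked z) ∨ t.EmptyEdge x

/-- A clash: `{A, ¬A} ⊆ L(x)`, or `(≤ n S C) ∈ L(x)` with `n+1` pairwise
`≐̸`-distinct `S`-neighbours of `x` whose labels contain `C`. -/
def Clash (RIA : List (Role × Role)) (t : CTree) : Prop :=
  ∃ x ∈ t.nodes,
    (∃ A : ℕ, DLConcept.atom A ∈ t.lab x ∧ DLConcept.neg (DLConcept.atom A) ∈ t.lab x) ∨
    (∃ n S C, DLConcept.atmost n S C ∈ t.lab x ∧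
      ∃ ys : Fin (n + 1) → ℕ,
        (∀ i, t.RNeighb RIA S x (ys i) ∧ C ∈ t.lab (ys i)) ∧
        ∀ i j, i ≠ j → t.neq (ys i) (ys j))

end CTree

/-- The expansion rules of the SHIQ tableaux algorithm, as a one-step transition
relation between completion trees. -/
inductive Step (Rp : Set ℕ) (RIA : List (Role × Role)) : CTree → CTree → Prop
  | conj (t t' : CTree) (x : ℕ) (C₁ C₂ : DLConcept)
      (hx : x ∈ t.nodes) (hC : DLConcept.and C₁ C₂ ∈ t.lab x)
      (hnib : ¬ t.IndirectlyBlocked x)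
      (hnew : ¬ ({C₁, C₂} ⊆ t.lab x))
      (hn : t'.nodes = t.nodes) (hr : t'.root = t.root) (hp : t'.parent = t.parent)
      (hl : t'.lab = Function.update t.lab x (t.lab x ∪ {C₁, C₂}))
      (he : t'.elb = t.elb) (hq : t'.neq = t.neq) :
      Step Rp RIA t t'
  | disj (t t' : CTree) (x : ℕ) (C₁ C₂ E : DLConcept)
      (hx : x ∈ t.nodes) (hC : DLConcept.or C₁ C₂ ∈ t.lab x)
      (hnib : ¬ t.IndirectlyBlocked x)
      (hnew : C₁ ∉ t.lab x ∧ C₂ ∉ t.lab x)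
      (hE : E = C₁ ∨ E = C₂)
      (hn : t'.nodes = t.nodes) (hr : t'.root = t.root) (hp : t'.parent = t.parent)
      (hl : t'.lab = Function.update t.lab x (insert E (t.lab x)))
      (he : t'.elb = t.elb) (hq : t'.neq = t.neq) :
      Step Rp RIA t t'
  | exists_ (t t' : CTree) (x y : ℕ) (S : Role) (C : DLConcept)
      (hx : x ∈ t.nodes) (hC : DLConcept.ex S C ∈ t.lab x)
      (hnb : ¬ t.Blocked x)
      (hnew : ¬ ∃ z, t.RNeighb RIA S x z ∧ C ∈ t.lab z)
      (hy : y ∉ t.nodes)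
      (hn : t'.nodes = insert y t.nodes) (hr : t'.root = t.root)
      (hp : t'.parent = Function.update t.parent y x)
      (hl : t'.lab = Function.update t.lab y {C})
      (he : t'.elb = Function.update t.elb y {S})
      (hq : t'.neq = t.neq) :
      Step Rp RIA t t'
  | all (t t' : CTree) (x y : ℕ) (S : Role) (C : DLConcept)
      (hx : x ∈ t.nodes) (hC : DLConcept.all S C ∈ t.lab x)
      (hnib : ¬ t.IndirectlyBlocked x)
      (hng : t.RNeighb RIA S x y) (hnew : C ∉ t.lab y)
      (hn : t'.nodes = t.nodes) (hr : t'.root = t.root) (hp : t'.parent = t.parent)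
      (hl : t'.lab = Function.update t.lab y (insert C (t.lab y)))
      (he : t'.elb = t.elb) (hq : t'.neq = t.neq) :
      Step Rp RIA t t'
  | allTrans (t t' : CTree) (x y : ℕ) (R S : Role) (C : DLConcept)
      (hx : x ∈ t.nodes) (hC : DLConcept.all S C ∈ t.lab x)
      (hnib : ¬ t.IndirectlyBlocked x)
      (htr : RTrans Rp R) (hsub : SubRole RIA R S)
      (hng : t.RNeighb RIA R x y) (hnew : DLConcept.all R C ∉ t.lab y)
      (hn : t'.nodes = t.nodes) (hr : t'.root = t.root) (hp : t'.parent = t.parent)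
      (hl : t'.lab = Function.update t.lab y (insert (DLConcept.all R C) (t.lab y)))
      (he : t'.elb = t.elb) (hq : t'.neq = t.neq) :
      Step Rp RIA t t'
  | choose (t t' : CTree) (x y : ℕ) (n : ℕ) (S : Role) (C E : DLConcept)
      (hx : x ∈ t.nodes)
      (hC : DLConcept.atleast n S C ∈ t.lab x ∨ DLConcept.atmost n S C ∈ t.lab x)
      (hnib : ¬ t.IndirectlyBlocked x)
      (hng : t.RNeighb RIA S x y)
      (hnew : C ∉ t.lab y ∧ C.nnfNeg ∉ t.lab y)
      (hE : E = C ∨ E = C.nnfNeg)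
      (hn : t'.nodes = t.nodes) (hr : t'.root = t.root) (hp : t'.parent = t.parent)
      (hl : t'.lab = Function.update t.lab y (insert E (t.lab y)))
      (he : t'.elb = t.elb) (hq : t'.neq = t.neq) :
      Step Rp RIA t t'
  | geq (t t' : CTree) (x : ℕ) (n : ℕ) (S : Role) (C : DLConcept) (ys : Fin n → ℕ)
      (hx : x ∈ t.nodes) (hC : DLConcept.atleast n S C ∈ t.lab x)
      (hnb : ¬ t.Blocked x)
      (hnew : ¬ ∃ zs : Fin n → ℕ,
        (∀ i, t.RNeighb RIA S x (zs i) ∧ C ∈ t.lab (zs i)) ∧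
        ∀ i j, i ≠ j → t.neq (zs i) (zs j))
      (hinj : Function.Injective ys) (hfresh : ∀ i, ys i ∉ t.nodes)
      (hn : t'.nodes = t.nodes ∪ Finset.image ys Finset.univ)
      (hr : t'.root = t.root)
      (hp1 : ∀ i, t'.parent (ys i) = x)
      (hp2 : ∀ z, (∀ i, z ≠ ys i) → t'.parent z = t.parent z)
      (hl1 : ∀ i, t'.lab (ys i) = {C})
      (hl2 : ∀ z, (∀ i, z ≠ ys i) → t'.lab z = t.lab z)
      (he1 : ∀ i, t'.elb (ys i) = {S})
      (he2 : ∀ z, (∀ i, z ≠ ys i) → t'.elb z = t.elb z)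
      (hq : ∀ u v, t'.neq u v ↔
        (t.neq u v ∨ ∃ i j, i ≠ j ∧ u = ys i ∧ v = ys j)) :
      Step Rp RIA t t'
  | leqSucc (t t' : CTree) (x y z : ℕ) (n : ℕ) (S : Role) (C : DLConcept)
      (hx : x ∈ t.nodes) (hC : DLConcept.atmost n S C ∈ t.lab x)
      (hnib : ¬ t.IndirectlyBlocked x)
      (hcount : n < {w | t.RNeighb RIA S x w ∧ C ∈ t.lab w}.ncard)
      (hy : t.RNeighb RIA S x y) (hz : t.RNeighb RIA S x z)
      (hCy : C ∈ t.lab y) (hCz : C ∈ t.lab z)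
      (hyz : y ≠ z) (hnq : ¬ t.neq y z) (hyanc : ¬ t.Anc y x)
      (hzanc : ¬ t.Anc z x)
      (hn : t'.nodes = t.nodes) (hr : t'.root = t.root) (hp : t'.parent = t.parent)
      (hlz : t'.lab z = t.lab z ∪ t.lab y)
      (hlo : ∀ w, w ≠ z → t'.lab w = t.lab w)
      (hez : t'.elb z = t.elb z ∪ t.elb y)
      (hey : t'.elb y = ∅)
      (heo : ∀ w, w ≠ z → w ≠ y → t'.elb w = t.elb w)
      (hq : ∀ u v, t'.neq u v ↔
        (t.neq u v ∨ (t.neq u y ∧ v = z) ∨ (u = z ∧ t.neq v y))) :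
      Step Rp RIA t t'
  | leqAnc (t t' : CTree) (x y z : ℕ) (n : ℕ) (S : Role) (C : DLConcept)
      (hx : x ∈ t.nodes) (hC : DLConcept.atmost n S C ∈ t.lab x)
      (hnib : ¬ t.IndirectlyBlocked x)
      (hcount : n < {w | t.RNeighb RIA S x w ∧ C ∈ t.lab w}.ncard)
      (hy : t.RNeighb RIA S x y) (hz : t.RNeighb RIA S x z)
      (hCy : C ∈ t.lab y) (hCz : C ∈ t.lab z)
      (hyz : y ≠ z) (hnq : ¬ t.neq y z) (hyanc : ¬ t.Anc y x)
      (hzanc : t.Anc z x)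
      (hn : t'.nodes = t.nodes) (hr : t'.root = t.root) (hp : t'.parent = t.parent)
      (hlz : t'.lab z = t.lab z ∪ t.lab y)
      (hlo : ∀ w, w ≠ z → t'.lab w = t.lab w)
      (hex : t'.elb x = t.elb x ∪ (t.elb y).image Role.Inv)
      (hey : t'.elb y = ∅)
      (heo : ∀ w, w ≠ x → w ≠ y → t'.elb w = t.elb w)
      (hq : ∀ u v, t'.neq u v ↔
        (t.neq u v ∨ (t.neq u y ∧ v = z) ∨ (u = z ∧ t.neq v y))) :
      Step Rp RIA t t'

/-- The initial completion tree: a single root node labelled `{D}`. -/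
def initTree (D : DLConcept) : CTree where
  nodes := {0}
  root := 0
  parent := id
  lab := fun x => if x = 0 then {D} else ∅
  elb := fun _ => ∅
  neq := fun _ _ => False
  root_mem := by simp
  parent_mem := by intro x hx hne; simp at hx; exact absurd hx hne
  reach := by intro x hx; simp at hx; exact ⟨0, by simpa using hx⟩
  neq_symm := by intro _ _ h; exact h

/-- A completion tree is complete iff no expansion rule is applicable to it. -/
def Complete (Rp : Set ℕ) (RIA : List (Role × Role)) (t : CTree) : Prop :=
  ¬ ∃ t', Step Rp RIA t t'

/-!
The run is steered by the tableau `T = (S, L, E)`. We maintain a map `π` from tree nodes to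
`S` with `L(x) ⊆ L(π x)`, with every edge realised by `E`, and with `π x ≠ π y` whenever
`x ≐̸ y`. Whenever some rule is applicable, some rule application preserves this: the ⊔- and
choose-rules take the alternative that `T` contains (P3, P11), new successors are sent to the
witnesses given by P5 and P10, and when the ≤-rule applies, P9 and pigeonhole yield two
neighbours with the same image, which are merged. Such a tree is clash-free by P1 and P9.

The run terminates: every rule increases the number of nodes, the number of emptied edges, or
the total size of the labels, and these stay bounded. Labels live in a finite closure; pairwise
blocking bounds the depth of the nodes that generate successors; and each generating concept
fires at most once per node, because its witnesses survive all later rule applications.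
-/

@[simp] lemma Role.Inv_Inv (R : Role) : R.Inv.Inv = R := by cases R <;> rfl

lemma SubRole.inv {RIA : List (Role × Role)} {R S : Role} (h : SubRole RIA R S) :
    SubRole RIA R.Inv S.Inv := by
  induction h with
  | refl => exact .refl
  | tail _ hstep ih => exact ih.tail (by simpa [or_comm] using hstep)

lemma Set.finite_and_ncard_le_of_mk_le {α : Type*} {s : Set α} {n : ℕ}
    (h : Cardinal.mk s ≤ n) : s.Finite ∧ s.ncard ≤ n := by
  have hf : s.Finite :=
    Cardinal.lt_aleph0_iff_set_finite.mp (h.trans_lt Cardinal.natCast_lt_aleph0)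
  have := hf.fintype
  refine ⟨hf, ?_⟩
  rw [Set.ncard_eq_toFinset_card']
  exact_mod_cast (by simpa [Cardinal.mk_fintype] using h)

/-! ### Paths to the root -/

namespace CTree

variable {t : CTree} {x y z w : ℕ}

lemma exists_iterate_eq_root_of_isPeriodicPt {k : ℕ} (hx : x ∈ t.nodes) (hk : 0 < k)
    (hcyc : Function.IsPeriodicPt t.parent k x) : ∃ j < k, t.parent^[j] x = t.root := by
  obtain ⟨m, hm⟩ := t.reach x hx
  exact ⟨m % k, Nat.mod_lt _ hk, (hcyc.iterate_mod_apply m).trans hm⟩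

lemma iterate_parent_mem (hpr : t.parent t.root = t.root) (hx : x ∈ t.nodes) (k : ℕ) :
    t.parent^[k] x ∈ t.nodes := by
  induction k with
  | zero => exact hx
  | succ k ih =>
    rw [Function.iterate_succ_apply']
    by_cases h : t.parent^[k] x = t.root
    · rw [h, hpr]; exact t.root_mem
    · exact t.parent_mem _ ih h

lemma Anc.ne_root (h : t.Anc z x) : x ≠ t.root := by
  obtain ⟨_, k, hk, _, hj⟩ := h
  simpa using hj 0 hk

lemma anc_parent (hx : x ∈ t.nodes) (hne : x ≠ t.root) : t.Anc (t.parent x) x :=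
  ⟨hx, 1, one_pos, rfl, fun j hj => by rwa [Nat.lt_one_iff.mp hj]⟩

lemma Succ.not_anc (hs : t.Succ x y) : ¬ t.Anc y x := by
  obtain ⟨-, hyr, hp⟩ := hs
  rintro ⟨hx, k, hk, hit, hj⟩
  have hcyc : Function.IsPeriodicPt t.parent (k + 1) x := by
    rw [Function.IsPeriodicPt, Function.IsFixedPt, Function.iterate_succ_apply', hit, hp]
  obtain ⟨j, hjk, hj'⟩ := exists_iterate_eq_root_of_isPeriodicPt hx (Nat.succ_pos k) hcyc
  rcases Nat.lt_succ_iff_lt_or_eq.mp hjk with hjk | rfl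
  · exact hj j hjk hj'
  · exact hyr (hit ▸ hj')

lemma Succ.ne (hs : t.Succ x y) : x ≠ y := by
  rintro rfl
  have h := anc_parent hs.1 hs.2.1
  rw [hs.2.2] at h
  exact hs.not_anc h

section Neighbours

variable {RIA : List (Role × Role)} {S : Role}

lemma RNeighb.mem (hx : x ∈ t.nodes) (h : t.RNeighb RIA S x w) : w ∈ t.nodes := by
  rcases h with ⟨hs, -⟩ | ⟨⟨-, hxr, rfl⟩, -⟩
  exacts [hs.1, t.parent_mem x hx hxr]

lemma RNeighb.rSucc_of_not_anc (h : t.RNeighb RIA S x w) (hna : ¬ t.Anc w x) :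
    t.RSucc RIA S x w := by
  rcases h with h | ⟨⟨hx, hxr, rfl⟩, -⟩
  exacts [h, absurd (anc_parent hx hxr) hna]

lemma RNeighb.parent_eq_of_anc (h : t.RNeighb RIA S x w) (ha : t.Anc w x) :
    t.parent x = w := by
  rcases h with ⟨hs, -⟩ | ⟨hs, -⟩
  exacts [absurd ha hs.not_anc, hs.2.2]

end Neighbours

lemma depth_spec (hx : x ∈ t.nodes) : t.parent^[t.depth x] x = t.root :=
  Nat.sInf_mem (t.reach x hx)

lemma depth_le {k : ℕ} (h : t.parent^[k] x = t.root) : t.depth x ≤ k :=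
  Nat.sInf_le h

lemma depth_root : t.depth t.root = 0 :=
  Nat.le_zero.mp (depth_le rfl)

lemma iterate_ne_root_of_lt_depth {j : ℕ} (hj : j < t.depth x) : t.parent^[j] x ≠ t.root :=
  fun h => (depth_le h).not_gt hj

lemma depth_parent (hx : x ∈ t.nodes) (hne : x ≠ t.root) :
    t.depth x = t.depth (t.parent x) + 1 := by
  obtain ⟨d, hd⟩ : ∃ d, t.depth x = d + 1 :=
    Nat.exists_eq_succ_of_ne_zero fun h => hne (by simpa [h] using depth_spec hx)
  have h1 : t.depth (t.parent x) ≤ d := by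
    apply depth_le
    rw [← Function.iterate_succ_apply, Nat.succ_eq_add_one, ← hd, depth_spec hx]
  have h2 : t.depth x ≤ t.depth (t.parent x) + 1 := by
    apply depth_le
    rw [Function.iterate_succ_apply, depth_spec (t.parent_mem x hx hne)]
  omega

lemma depth_eq_of_parent_eqOn {t' : CTree} (hpr : t.parent t.root = t.root)
    (hag : ∀ z ∈ t.nodes, t'.parent z = t.parent z) (hr : t'.root = t.root)
    (hx : x ∈ t.nodes) : t'.depth x = t.depth x := by
  have hit : ∀ k, t'.parent^[k] x = t.parent^[k] x := by
    intro k
    induction k with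
    | zero => rfl
    | succ k ih =>
      rw [Function.iterate_succ_apply', Function.iterate_succ_apply', ih,
        hag _ (iterate_parent_mem hpr hx k)]
  simp only [depth, hit, hr]

lemma anc_iterate_of_lt (hpr : t.parent t.root = t.root) (hx : x ∈ t.nodes) {i j : ℕ}
    (hij : i < j) (hj : j ≤ t.depth x) : t.Anc (t.parent^[j] x) (t.parent^[i] x) := by
  refine ⟨iterate_parent_mem hpr hx i, j - i, by omega, ?_, fun l hl => ?_⟩
  · rw [← Function.iterate_add_apply, Nat.sub_add_cancel hij.le]
  · rw [← Function.iterate_add_apply]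
    exact iterate_ne_root_of_lt_depth (by omega)

/-- On the path from an unblocked node to the root, no two nodes below the root carry the same
triple (own label, parent label, edge label), so pigeonhole bounds its length. -/
lemma depth_le_of_not_blocked (hpr : t.parent t.root = t.root) {K : Finset DLConcept}
    {Rs : Finset Role} (hlab : ∀ x ∈ t.nodes, t.lab x ⊆ K) (helb : ∀ x ∈ t.nodes, t.elb x ⊆ Rs)
    (hx : x ∈ t.nodes) (hnb : ¬ t.Blocked x) :
    t.depth x ≤ (K.powerset ×ˢ K.powerset ×ˢ Rs.powerset).card + 1 := by
  by_contra! hgt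
  set p := fun i => t.parent^[i] x
  have hmem : ∀ i, p i ∈ t.nodes := iterate_parent_mem hpr hx
  have hlt : (K.powerset ×ˢ K.powerset ×ˢ Rs.powerset).card <
      (Finset.Icc 1 (t.depth x - 1)).card := by
    rw [Nat.card_Icc]; omega
  obtain ⟨i, hi, j, hj, hij, heq⟩ := Finset.exists_ne_map_eq_of_card_lt_of_maps_to hlt
    (f := fun i => (t.lab (p i), t.lab (p (i + 1)), t.elb (p i))) (fun i _ => by
      simp only [Finset.coe_product, Set.mem_prod, Finset.mem_coe, Finset.mem_powerset]
      exact ⟨hlab _ (hmem i), hlab _ (hmem (i + 1)), helb _ (hmem i)⟩)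
  wlog hlt' : i < j generalizing i j
  · exact this j hj i hi hij.symm heq.symm (by omega)
  simp only [Finset.mem_Icc] at hi hj
  simp only [Prod.mk.injEq] at heq
  have hpar : ∀ k, t.parent (p k) = p (k + 1) := fun k =>
    (Function.iterate_succ_apply' _ _ _).symm
  have hcand : t.Cand (p i) := by
    refine ⟨hmem i, iterate_ne_root_of_lt_depth (by omega), p j,
      anc_iterate_of_lt hpr hx hlt' (by omega), iterate_ne_root_of_lt_depth (by omega), ?_,
      heq.1, by rw [hpar, hpar]; exact heq.2.1, heq.2.2⟩
    rw [hpar]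
    exact anc_iterate_of_lt hpr hx (by omega) (by omega)
  exact hnb ⟨p i, Or.inr (anc_iterate_of_lt hpr hx (i := 0) (by omega) (by omega)),
    Or.inl hcand⟩

end CTree

/-! ### The closure -/

namespace DLConcept

def subconcepts : DLConcept → Finset DLConcept
  | .top => {.top}
  | .bot => {.bot}
  | .atom a => {.atom a}
  | .neg C => insert (.neg C) C.subconcepts
  | .and C D => insert (.and C D) (C.subconcepts ∪ D.subconcepts)
  | .or C D => insert (.or C D) (C.subconcepts ∪ D.subconcepts)
  | .all R C => insert (.all R C) C.subconcepts
  | .ex R C => insert (.ex R C) C.subconcepts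
  | .atleast n R C => insert (.atleast n R C) C.subconcepts
  | .atmost n R C => insert (.atmost n R C) C.subconcepts

lemma mem_subconcepts_self (C : DLConcept) : C ∈ C.subconcepts := by
  cases C <;> simp [subconcepts]

lemma subconcepts_subset {X C : DLConcept} (h : C ∈ X.subconcepts) :
    C.subconcepts ⊆ X.subconcepts := by
  induction X with
  | top | bot | atom => simp_all [subconcepts]
  | neg _ ih | all _ _ ih | ex _ _ ih | atleast _ _ _ ih | atmost _ _ _ ih =>
    simp only [subconcepts, Finset.mem_insert] at h ⊢
    rcases h with rfl | h
    · rfl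
    · exact (ih h).trans (Finset.subset_insert _ _)
  | and _ _ ih₁ ih₂ | or _ _ ih₁ ih₂ =>
    simp only [subconcepts, Finset.mem_insert, Finset.mem_union] at h ⊢
    rcases h with rfl | h | h
    · rfl
    · exact (ih₁ h).trans (Finset.subset_union_left.trans (Finset.subset_insert _ _))
    · exact (ih₂ h).trans (Finset.subset_union_right.trans (Finset.subset_insert _ _))

lemma rolesOf_subset_of_mem_subconcepts {X C : DLConcept} (h : C ∈ X.subconcepts) :
    C.rolesOf ⊆ X.rolesOf := by
  induction X with
  | top | bot | atom => simp_all [subconcepts]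
  | neg _ ih | all _ _ ih | ex _ _ ih | atleast _ _ _ ih | atmost _ _ _ ih =>
    simp only [subconcepts, Finset.mem_insert] at h
    rcases h with rfl | h
    · rfl
    · exact (ih h).trans (by simp [rolesOf, Finset.subset_insert])
  | and _ _ ih₁ ih₂ | or _ _ ih₁ ih₂ =>
    simp only [subconcepts, Finset.mem_insert, Finset.mem_union] at h
    rcases h with rfl | h | h
    · rfl
    · exact (ih₁ h).trans (by simp [rolesOf])
    · exact (ih₂ h).trans (by simp [rolesOf])

lemma rolesOf_nnfNeg_subset (C : DLConcept) : C.nnfNeg.rolesOf ⊆ C.rolesOf := by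
  induction C with
  | atleast n => cases n <;> simp [nnfNeg, rolesOf]
  | and _ _ ih₁ ih₂ | or _ _ ih₁ ih₂ => exact Finset.union_subset_union ih₁ ih₂
  | all _ _ ih | ex _ _ ih => exact Finset.insert_subset_insert _ ih
  | _ => simp [nnfNeg, rolesOf]

/-- `clos(X)`: the subconcepts of `X` and their `~`. -/
def nnfClosure (X : DLConcept) : Finset DLConcept :=
  X.subconcepts ∪ X.subconcepts.image nnfNeg

lemma mem_nnfClosure_of_mem_subconcepts {X C : DLConcept} (h : C ∈ X.subconcepts) :
    C ∈ X.nnfClosure :=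
  Finset.mem_union_left _ h

lemma nnfNeg_mem_nnfClosure {X C : DLConcept} (h : C ∈ X.subconcepts) :
    C.nnfNeg ∈ X.nnfClosure :=
  Finset.mem_union_right _ (Finset.mem_image_of_mem _ h)

lemma nnfClosure_subset {X C : DLConcept} (h : C ∈ X.subconcepts) :
    C.nnfClosure ⊆ X.nnfClosure :=
  Finset.union_subset_union (subconcepts_subset h)
    (Finset.image_subset_image (subconcepts_subset h))

lemma rolesOf_subset_of_mem_nnfClosure {X C : DLConcept} (h : C ∈ X.nnfClosure) :
    C.rolesOf ⊆ X.rolesOf := by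
  rcases Finset.mem_union.mp h with h | h
  · exact rolesOf_subset_of_mem_subconcepts h
  · obtain ⟨W, hW, rfl⟩ := Finset.mem_image.mp h
    exact (rolesOf_nnfNeg_subset W).trans (rolesOf_subset_of_mem_subconcepts hW)

end DLConcept

open DLConcept in
lemma DirectSub.mem_subconcepts {C' C : DLConcept} (h : DirectSub C' C) :
    C' ∈ C.subconcepts := by
  cases h <;> simp [subconcepts, mem_subconcepts_self]

open DLConcept in
lemma DirectSub.mem_nnfClosure_of_nnfNeg {C W : DLConcept} (h : DirectSub C W.nnfNeg) :
    C ∈ W.nnfClosure := by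
  cases W with
  | neg V =>
    exact mem_nnfClosure_of_mem_subconcepts <| subconcepts_subset
      (by simp [subconcepts, mem_subconcepts_self]) (DirectSub.mem_subconcepts (C := V) h)
  | atleast n => cases n <;> cases h; simp [nnfClosure, subconcepts, mem_subconcepts_self]
  | _ =>
    cases h <;> first
      | exact nnfNeg_mem_nnfClosure (by simp [subconcepts, mem_subconcepts_self])
      | simp [nnfClosure, subconcepts, mem_subconcepts_self]

open DLConcept in
lemma DirectSub.mem_nnfClosure {X C C' : DLConcept} (hC : C ∈ X.nnfClosure)
    (h : DirectSub C' C) : C' ∈ X.nnfClosure := by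
  rcases Finset.mem_union.mp hC with hC | hC
  · exact mem_nnfClosure_of_mem_subconcepts (subconcepts_subset hC h.mem_subconcepts)
  · obtain ⟨W, hW, rfl⟩ := Finset.mem_image.mp hC
    exact nnfClosure_subset hW h.mem_nnfClosure_of_nnfNeg

namespace DLConcept

/-- Unlike an arbitrary member of `clos(X)`, such a body therefore has its `~` in `clos(X)`. -/
lemma mem_subconcepts_of_numRestr_mem_nnfClosure {X C : DLConcept} {n : ℕ} {S : Role}
    (h : atleast n S C ∈ X.nnfClosure ∨ atmost n S C ∈ X.nnfClosure) :
    C ∈ X.subconcepts := by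
  have hW : ∀ W : DLConcept, W.nnfNeg = atleast n S C ∨ W.nnfNeg = atmost n S C →
      C ∈ W.subconcepts := by
    intro W hW
    cases W with
    | atleast m => cases m <;> simp_all [nnfNeg, subconcepts, mem_subconcepts_self]
    | neg V => rcases hW with rfl | rfl <;> simp [subconcepts, mem_subconcepts_self]
    | _ => simp_all [nnfNeg, subconcepts, mem_subconcepts_self]
  rcases h with h | h <;> rcases Finset.mem_union.mp h with h | h
  · exact subconcepts_subset h (DirectSub.atleast n S C).mem_subconcepts
  · obtain ⟨W, hW', heq⟩ := Finset.mem_image.mp h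
    exact subconcepts_subset hW' (hW W (Or.inl heq))
  · exact subconcepts_subset h (DirectSub.atmost n S C).mem_subconcepts
  · obtain ⟨W, hW', heq⟩ := Finset.mem_image.mp h
    exact subconcepts_subset hW' (hW W (Or.inr heq))

end DLConcept

section RoleSet

variable {D : DLConcept} {RIA : List (Role × Role)}

lemma Inv_mem_RD {R : Role} (h : R ∈ RD D RIA) : R.Inv ∈ RD D RIA := by
  simp only [RD, Finset.mem_union, Finset.mem_image] at h ⊢
  rcases h with h | ⟨R₀, hR₀, rfl⟩
  · exact Or.inr ⟨R, h, rfl⟩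
  · simpa using Or.inl hR₀

lemma mem_RD_of_mem_rolesOf {R : Role} (h : R ∈ D.rolesOf) : R ∈ RD D RIA := by
  simp [RD, h]

lemma mem_RD_of_mem_RIA {R S : Role} (h : (R, S) ∈ RIA) : R ∈ RD D RIA := by
  suffices R ∈ RIA.foldr (fun p acc => insert p.1 (insert p.2 acc)) ∅ by
    simp only [RD, Finset.mem_union]
    exact Or.inl (Or.inr this)
  induction RIA with
  | nil => simp at h
  | cons p l ih =>
    rcases List.mem_cons.mp h with rfl | h
    · simp
    · simp [ih h]

lemma SubRole.eq_or_mem_RD {R S : Role} (h : SubRole RIA R S) : R = S ∨ R ∈ RD D RIA := by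
  rcases h.cases_head with h | ⟨_, hgen | hgen, _⟩
  · exact Or.inl h
  · exact Or.inr (mem_RD_of_mem_RIA hgen)
  · simpa using Or.inr (Inv_mem_RD (mem_RD_of_mem_RIA (D := D) hgen))

end RoleSet

section LabelClosure

open DLConcept

variable {D : DLConcept} {RIA : List (Role × Role)}

/-- The concepts that can occur in node labels: `clos(D)` together with the `∀R.C` that the
`∀₊`-rule may add, for `∀S.C ∈ clos(D)` and `R ∈ R_D`. -/
def labelClosure (D : DLConcept) (RIA : List (Role × Role)) : Finset DLConcept :=
  D.nnfClosure ∪ ((RD D RIA) ×ˢ D.nnfClosure).image fun p => DLConcept.all p.1 p.2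

lemma mem_labelClosure_self : D ∈ labelClosure D RIA :=
  Finset.mem_union_left _ (mem_nnfClosure_of_mem_subconcepts (mem_subconcepts_self D))

lemma DirectSub.mem_labelClosure {C C' : DLConcept} (hC : C ∈ labelClosure D RIA)
    (h : DirectSub C' C) : C' ∈ labelClosure D RIA := by
  rcases Finset.mem_union.mp hC with hC | hC
  · exact Finset.mem_union_left _ (h.mem_nnfClosure hC)
  · obtain ⟨⟨R, C₀⟩, hp, rfl⟩ := Finset.mem_image.mp hC
    cases h
    exact Finset.mem_union_left _ (Finset.mem_product.mp hp).2

lemma all_mem_labelClosure {S R : Role} {C : DLConcept} (h : all S C ∈ labelClosure D RIA)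
    (hR : R ∈ RD D RIA) : all R C ∈ labelClosure D RIA := by
  have hC : C ∈ D.nnfClosure := by
    rcases Finset.mem_union.mp h with h | h
    · exact (DirectSub.all S C).mem_nnfClosure h
    · obtain ⟨⟨R, C₀⟩, hp, heq⟩ := Finset.mem_image.mp h
      cases heq
      exact (Finset.mem_product.mp hp).2
  exact Finset.mem_union_right _
    (Finset.mem_image.mpr ⟨(R, C), Finset.mem_product.mpr ⟨hR, hC⟩, rfl⟩)

lemma mem_labelClosure_of_numRestr {n : ℕ} {S : Role} {C : DLConcept}
    (h : atleast n S C ∈ labelClosure D RIA ∨ atmost n S C ∈ labelClosure D RIA) :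
    C ∈ labelClosure D RIA ∧ C.nnfNeg ∈ labelClosure D RIA := by
  have hC : C ∈ D.subconcepts := by
    refine mem_subconcepts_of_numRestr_mem_nnfClosure (n := n) (S := S) ?_
    simpa [labelClosure] using h
  exact ⟨Finset.mem_union_left _ (mem_nnfClosure_of_mem_subconcepts hC),
    Finset.mem_union_left _ (nnfNeg_mem_nnfClosure hC)⟩

lemma rolesOf_subset_RD {C : DLConcept} (h : C ∈ labelClosure D RIA) :
    C.rolesOf ⊆ RD D RIA := by
  have hD : ∀ C ∈ D.nnfClosure, C.rolesOf ⊆ RD D RIA := fun C hC R hR =>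
    mem_RD_of_mem_rolesOf (rolesOf_subset_of_mem_nnfClosure hC hR)
  rcases Finset.mem_union.mp h with h | h
  · exact hD C h
  · obtain ⟨⟨R, C₀⟩, hp, rfl⟩ := Finset.mem_image.mp h
    exact Finset.insert_subset (Finset.mem_product.mp hp).1 (hD C₀ (Finset.mem_product.mp hp).2)

end LabelClosure

/-! ### Rule applications on completion trees -/

/-- The condition under which the ∃- and ≥-rules for a generating concept are no longer
applicable to `x`. -/
def Witnessed (RIA : List (Role × Role)) (t : CTree) (x : ℕ) : DLConcept → Prop
  | .ex S C => ∃ z, t.RNeighb RIA S x z ∧ C ∈ t.lab z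
  | .atleast n S C => ∃ zs : Fin n → ℕ,
      (∀ i, t.RNeighb RIA S x (zs i) ∧ C ∈ t.lab (zs i)) ∧ ∀ i j, i ≠ j → t.neq (zs i) (zs j)
  | _ => True

def succBound : DLConcept → ℕ
  | .ex _ _ => 1
  | .atleast n _ _ => n
  | _ => 0

lemma succBound_pos_of_not_witnessed {RIA : List (Role × Role)} {t : CTree} {x : ℕ}
    {G : DLConcept} (h : ¬ Witnessed RIA t x G) : 0 < succBound G := by
  cases G with
  | ex => exact Nat.one_pos
  | atleast n =>
    refine Nat.pos_of_ne_zero fun hn => h ?_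
    subst hn
    exact ⟨Fin.elim0, fun i => i.elim0, fun i => i.elim0⟩
  | _ => exact absurd trivial h

namespace CTree

def children (t : CTree) (x : ℕ) : Finset ℕ :=
  t.nodes.filter fun y => y ≠ t.root ∧ t.parent y = x

def emptied (t : CTree) : Finset ℕ :=
  t.nodes.filter fun x => x ≠ t.root ∧ t.elb x = ∅

def weight (t : CTree) : ℕ :=
  t.nodes.card + t.emptied.card + ∑ x ∈ t.nodes, (t.lab x).card

structure Extends (t t' : CTree) : Prop where
  nodes_subset : t.nodes ⊆ t'.nodes
  root_eq : t'.root = t.root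
  parent_eq : ∀ z ∈ t.nodes, t'.parent z = t.parent z
  lab_subset : ∀ z ∈ t.nodes, t.lab z ⊆ t'.lab z
  elb_eq : ∀ z ∈ t.nodes, t'.elb z = t.elb z
  neq_imp : ∀ u v, t.neq u v → t'.neq u v

section Extends

variable {t t' : CTree} {RIA : List (Role × Role)} {x : ℕ}

lemma Extends.rNeighb (h : t.Extends t') {S : Role} {u : ℕ} (hu : t.RNeighb RIA S x u) :
    t'.RNeighb RIA S x u := by
  have hsucc : ∀ {a b}, t.Succ a b → t'.Succ a b := fun ⟨hb, hbr, hp⟩ =>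
    ⟨h.nodes_subset hb, h.root_eq ▸ hbr, (h.parent_eq _ hb).trans hp⟩
  rcases hu with ⟨hs, S₀, hS₀, hsub⟩ | ⟨hs, S₀, hS₀, hsub⟩
  · exact Or.inl ⟨hsucc hs, S₀, (h.elb_eq _ hs.1).symm ▸ hS₀, hsub⟩
  · exact Or.inr ⟨hsucc hs, S₀, (h.elb_eq _ hs.1).symm ▸ hS₀, hsub⟩

lemma Extends.witnessed (h : t.Extends t') {C : DLConcept} (hx : x ∈ t.nodes)
    (hC : Witnessed RIA t x C) : Witnessed RIA t' x C := by
  cases C with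
  | ex S C =>
    obtain ⟨u, hu, hCu⟩ := hC
    exact ⟨u, h.rNeighb hu, h.lab_subset u (hu.mem hx) hCu⟩
  | atleast n S C =>
    obtain ⟨zs, hzs, hne⟩ := hC
    exact ⟨zs, fun i => ⟨h.rNeighb (hzs i).1, h.lab_subset _ ((hzs i).1.mem hx) (hzs i).2⟩,
      fun i j hij => h.neq_imp _ _ (hne i j hij)⟩
  | _ => trivial

lemma Extends.not_emptyEdge (h : t.Extends t') (hx : x ∈ t.nodes) (hee : ¬ t'.EmptyEdge x) :
    ¬ t.EmptyEdge x := fun ⟨_, hxr, he⟩ =>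
  hee ⟨h.nodes_subset hx, h.root_eq ▸ hxr, (h.elb_eq x hx).trans he⟩

lemma Extends.weight_lt (h : t.Extends t') (hs : t.nodes ⊂ t'.nodes) : t.weight < t'.weight := by
  have hN := Finset.card_lt_card hs
  have hE : t.emptied.card ≤ t'.emptied.card := by
    refine Finset.card_le_card fun z hz => ?_
    simp only [emptied, Finset.mem_filter] at hz ⊢
    exact ⟨h.nodes_subset hz.1, h.root_eq ▸ hz.2.1, (h.elb_eq z hz.1).trans hz.2.2⟩
  have hL : ∑ z ∈ t.nodes, (t.lab z).card ≤ ∑ z ∈ t'.nodes, (t'.lab z).card :=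
    (Finset.sum_le_sum fun z hz => Finset.card_le_card (h.lab_subset z hz)).trans
      (Finset.sum_le_sum_of_subset h.nodes_subset)
  unfold weight
  omega

end Extends

def updateLab (t : CTree) (w : ℕ) (L : Finset DLConcept) : CTree :=
  { t with lab := Function.update t.lab w L }

section UpdateLab

variable {t : CTree} {w : ℕ} {L : Finset DLConcept}

lemma extends_updateLab (hL : t.lab w ⊆ L) : t.Extends (t.updateLab w L) where
  nodes_subset := subset_rfl
  root_eq := rfl
  parent_eq _ _ := rfl
  lab_subset z _ := by
    rcases eq_or_ne z w with rfl | hz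
    · simpa [updateLab] using hL
    · simp [updateLab, hz]
  elb_eq _ _ := rfl
  neq_imp _ _ := id

lemma weight_lt_updateLab (hw : w ∈ t.nodes) (hL : t.lab w ⊂ L) :
    t.weight < (t.updateLab w L).weight := by
  have hsum : ∑ z ∈ t.nodes, (t.lab z).card <
      ∑ z ∈ t.nodes, ((t.updateLab w L).lab z).card := by
    refine Finset.sum_lt_sum (fun z hz => Finset.card_le_card
      ((extends_updateLab hL.1).lab_subset z hz)) ⟨w, hw, ?_⟩
    simpa [updateLab] using Finset.card_lt_card hL
  exact Nat.add_lt_add_left hsum _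

end UpdateLab

/-- The effect of the ∃- and ≥-rules. -/
structure AddsSuccs {n : ℕ} (t t' : CTree) (x : ℕ) (ys : Fin n → ℕ) (C : DLConcept)
    (S : Role) : Prop where
  injective : Function.Injective ys
  fresh : ∀ i, ys i ∉ t.nodes
  nodes_eq : t'.nodes = t.nodes ∪ Finset.univ.image ys
  root_eq : t'.root = t.root
  parent_new : ∀ i, t'.parent (ys i) = x
  parent_old : ∀ z ∈ t.nodes, t'.parent z = t.parent z
  lab_new : ∀ i, t'.lab (ys i) = {C}
  lab_old : ∀ z ∈ t.nodes, t'.lab z = t.lab z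
  elb_new : ∀ i, t'.elb (ys i) = {S}
  elb_old : ∀ z ∈ t.nodes, t'.elb z = t.elb z
  neq_iff : ∀ u v, t'.neq u v ↔ t.neq u v ∨ ∃ i j, i ≠ j ∧ u = ys i ∧ v = ys j

namespace AddsSuccs

variable {t t' : CTree} {x n : ℕ} {ys : Fin n → ℕ} {C : DLConcept} {S : Role}
  (h : t.AddsSuccs t' x ys C S)
include h

lemma mem_nodes_iff {z : ℕ} : z ∈ t'.nodes ↔ z ∈ t.nodes ∨ ∃ i, ys i = z := by
  simp [h.nodes_eq]

lemma ne_root (i : Fin n) : ys i ≠ t'.root := fun hr =>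
  h.fresh i (by rw [hr, h.root_eq]; exact t.root_mem)

lemma extend_apply_old {α : Type*} (g : Fin n → α) (f : ℕ → α) {z : ℕ} (hz : z ∈ t.nodes) :
    Function.extend ys g f z = f z :=
  Function.extend_apply' _ _ _ fun ⟨i, hi⟩ => h.fresh i (hi ▸ hz)

lemma toExtends : t.Extends t' where
  nodes_subset := h.nodes_eq ▸ Finset.subset_union_left
  root_eq := h.root_eq
  parent_eq := h.parent_old
  lab_subset z hz := (h.lab_old z hz).symm.subset
  elb_eq := h.elb_old
  neq_imp u v huv := (h.neq_iff u v).mpr (Or.inl huv)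

lemma rNeighb {RIA : List (Role × Role)} (i : Fin n) : t'.RNeighb RIA S x (ys i) :=
  Or.inl ⟨⟨h.mem_nodes_iff.mpr (Or.inr ⟨i, rfl⟩), h.ne_root i, h.parent_new i⟩, S,
    by simp [h.elb_new i], .refl⟩

lemma weight_lt (hn : 0 < n) : t.weight < t'.weight :=
  h.toExtends.weight_lt <| Finset.ssubset_iff_subset_ne.mpr ⟨h.toExtends.nodes_subset,
    fun heq => h.fresh ⟨0, hn⟩ (heq ▸ h.mem_nodes_iff.mpr (Or.inr ⟨_, rfl⟩))⟩

lemma card_children_le (w : ℕ) :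
    (t'.children w).card ≤ (t.children w).card + if w = x then n else 0 := by
  have hsub : t'.children w ⊆ t.children w ∪ if w = x then Finset.univ.image ys else ∅ := by
    intro z hz
    simp only [children, Finset.mem_filter] at hz
    obtain ⟨hz, hzr, hpz⟩ := hz
    rcases h.mem_nodes_iff.mp hz with hz | ⟨i, rfl⟩
    · rw [h.parent_old z hz] at hpz
      exact Finset.mem_union_left _ (Finset.mem_filter.mpr ⟨hz, h.root_eq ▸ hzr, hpz⟩)
    · rw [h.parent_new i] at hpz
      subst hpz
      simp
  refine (Finset.card_le_card hsub).trans ((Finset.card_union_le _ _).trans ?_)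
  split_ifs
  · simpa using Finset.card_image_le.trans (Finset.card_fin n).le
  · simp

end AddsSuccs

/-- The effect of the ≤-rule merging `y` into `z`; `E` is added to the edge label of `w`. -/
def merge (t : CTree) (y z w : ℕ) (E : Finset Role) : CTree where
  nodes := t.nodes
  root := t.root
  parent := t.parent
  lab := Function.update t.lab z (t.lab z ∪ t.lab y)
  elb := Function.update (Function.update t.elb w (t.elb w ∪ E)) y ∅
  neq u v := t.neq u v ∨ (t.neq u y ∧ v = z) ∨ (u = z ∧ t.neq v y)
  root_mem := t.root_mem
  parent_mem := t.parent_mem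
  reach := t.reach
  neq_symm u v := by
    rintro (h | ⟨h, rfl⟩ | ⟨rfl, h⟩)
    exacts [Or.inl (t.neq_symm u v h), Or.inr (Or.inr ⟨rfl, h⟩), Or.inr (Or.inl ⟨h, rfl⟩)]

section Merge

variable {t : CTree} {x y z w : ℕ} {E : Finset Role} {RIA : List (Role × Role)}

lemma lab_subset_merge (v : ℕ) : t.lab v ⊆ (t.merge y z w E).lab v := by
  rcases eq_or_ne v z with rfl | hv
  · simp [merge]
  · simp [merge, hv]

lemma elb_subset_merge {v : ℕ} (hv : v ≠ y) : t.elb v ⊆ (t.merge y z w E).elb v := by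
  rcases eq_or_ne v w with rfl | hvw
  · simp [merge, hv]
  · simp [merge, hv, hvw]

lemma weight_lt_merge (hy : y ∈ t.nodes) (hyr : y ≠ t.root) (hyE : t.elb y ≠ ∅)
    (hwE : t.elb w ≠ ∅) : t.weight < (t.merge y z w E).weight := by
  have hE : t.emptied ⊂ (t.merge y z w E).emptied := by
    refine Finset.ssubset_iff_subset_ne.mpr ⟨fun v hv => ?_, fun heq => ?_⟩
    · simp only [emptied, Finset.mem_filter] at hv ⊢
      have hvy : v ≠ y := fun h => hyE (h ▸ hv.2.2)
      have hvw : v ≠ w := fun h => hwE (h ▸ hv.2.2)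
      exact ⟨hv.1, hv.2.1, by simp [merge, hvy, hvw, hv.2.2]⟩
    · have : y ∈ (t.merge y z w E).emptied :=
        Finset.mem_filter.mpr ⟨hy, hyr, by simp [merge]⟩
      rw [← heq] at this
      exact hyE (Finset.mem_filter.mp this).2.2
  have hL : ∑ v ∈ t.nodes, (t.lab v).card ≤ ∑ v ∈ t.nodes, ((t.merge y z w E).lab v).card :=
    Finset.sum_le_sum fun v _ => Finset.card_le_card (lab_subset_merge v)
  exact Nat.add_lt_add_of_lt_of_le (Nat.add_lt_add_left (Finset.card_lt_card hE) _) hL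

lemma exists_rNeighb_merge (hpy : t.parent y = x)
    (hxz : ∀ S S₀, S₀ ∈ t.elb y → SubRole RIA S₀ S → (t.merge y z w E).RNeighb RIA S x z)
    {v u : ℕ} {S : Role} (hv : v ≠ y) (h : t.RNeighb RIA S v u) :
    ∃ u', (t.merge y z w E).RNeighb RIA S v u' ∧ t.lab u ⊆ (t.merge y z w E).lab u' ∧
      (u' = u ∨ u = y ∧ u' = z) := by
  rcases h with ⟨hs, S₀, hS₀, hsub⟩ | ⟨hs, S₀, hS₀, hsub⟩
  · rcases eq_or_ne u y with rfl | hu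
    · rw [← hs.2.2, hpy]
      exact ⟨z, hxz S S₀ hS₀ hsub, by simp [merge], Or.inr ⟨rfl, rfl⟩⟩
    · exact ⟨u, Or.inl ⟨hs, S₀, elb_subset_merge hu hS₀, hsub⟩, lab_subset_merge u, Or.inl rfl⟩
  · exact ⟨u, Or.inr ⟨hs, S₀, elb_subset_merge hv hS₀, hsub⟩, lab_subset_merge u, Or.inl rfl⟩

lemma witnessed_merge (hpy : t.parent y = x) (hyy : ¬ t.neq y y)
    (hxz : ∀ S S₀, S₀ ∈ t.elb y → SubRole RIA S₀ S → (t.merge y z w E).RNeighb RIA S x z)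
    {v : ℕ} {C : DLConcept} (hv : v ≠ y) (h : Witnessed RIA t v C) :
    Witnessed RIA (t.merge y z w E) v C := by
  cases C with
  | ex S C =>
    obtain ⟨u, hu, hCu⟩ := h
    obtain ⟨u', hu', hlab, -⟩ := exists_rNeighb_merge hpy hxz hv hu
    exact ⟨u', hu', hlab hCu⟩
  | atleast n S C =>
    obtain ⟨zs, hzs, hne⟩ := h
    choose zs' hzs' hlab hzz using fun i => exists_rNeighb_merge hpy hxz hv (hzs i).1
    refine ⟨zs', fun i => ⟨hzs' i, hlab i (hzs i).2⟩, fun i j hij => ?_⟩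
    have hij' := hne i j hij
    rcases hzz i with hi | ⟨hyi, hzi⟩ <;> rcases hzz j with hj | ⟨hyj, hzj⟩
    · exact Or.inl (hi ▸ hj ▸ hij')
    · exact Or.inr (Or.inl ⟨hi ▸ hyj ▸ hij', hzj⟩)
    · exact Or.inr (Or.inr ⟨hzi, hj ▸ hyi ▸ t.neq_symm _ _ hij'⟩)
    · rw [hyi, hyj] at hij'
      exact absurd hij' hyy
  | _ => trivial

end Merge

end CTree

/-! ### Trees guided by a tableau -/

def depthBound (D : DLConcept) (RIA : List (Role × Role)) : ℕ :=
  ((labelClosure D RIA).powerset ×ˢ (labelClosure D RIA).powerset ×ˢ (RD D RIA).powerset).card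
    + 1

def nodeBound (D : DLConcept) (RIA : List (Role × Role)) : ℕ :=
  ∑ d ∈ Finset.range (depthBound D RIA + 2), (∑ C ∈ labelClosure D RIA, succBound C) ^ d

def weightBound (D : DLConcept) (RIA : List (Role × Role)) : ℕ :=
  2 * nodeBound D RIA + nodeBound D RIA * (labelClosure D RIA).card

/-- The invariant of the run: `π` maps the tree into the tableau `T`, and `gen x` holds the
generating concepts for which the ∃- or ≥-rule has fired at `x`. -/
structure IsGuided {Rp : Set ℕ} {RIA : List (Role × Role)} {D : DLConcept}
    (T : Tableau Rp RIA D) (t : CTree) (π : ℕ → T.S) (gen : ℕ → Finset DLConcept) : Prop where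
  lab_mem_L : ∀ x ∈ t.nodes, ∀ C ∈ t.lab x, C ∈ T.L (π x)
  edge_mem_E : ∀ y ∈ t.nodes, y ≠ t.root → ∀ S ∈ t.elb y, (π (t.parent y), π y) ∈ T.E S
  neq_imp : ∀ u v, t.neq u v → u ∈ t.nodes ∧ v ∈ t.nodes ∧ π u ≠ π v
  lab_subset : ∀ x ∈ t.nodes, t.lab x ⊆ labelClosure D RIA
  elb_subset : ∀ x ∈ t.nodes, t.elb x ⊆ RD D RIA
  parent_root : t.parent t.root = t.root
  depth_le : ∀ x ∈ t.nodes, t.depth x ≤ depthBound D RIA + 1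
  gen_subset : ∀ x, gen x ⊆ labelClosure D RIA
  gen_eq_empty : ∀ x ∉ t.nodes, gen x = ∅
  witnessed : ∀ x ∈ t.nodes, ¬ t.EmptyEdge x → ∀ C ∈ gen x, Witnessed RIA t x C
  card_children_le : ∀ x, (t.children x).card ≤ ∑ C ∈ gen x, succBound C

lemma isGuided_initTree {Rp : Set ℕ} {RIA : List (Role × Role)} {D : DLConcept}
    (T : Tableau Rp RIA D) : ∃ π : ℕ → T.S, IsGuided T (initTree D) π fun _ => ∅ := by
  obtain ⟨s, hs⟩ := T.root
  have hnodes : ∀ x, x ∈ (initTree D).nodes ↔ x = 0 := fun x => by simp [initTree]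
  refine ⟨fun _ => s, ⟨?_, ?_, ?_, ?_, ?_, rfl, ?_, ?_, fun _ _ => rfl, ?_, ?_⟩⟩
  · intro x hx C hC
    simp_all [initTree]
  · intro y hy hyr
    exact absurd ((hnodes y).mp hy) hyr
  · simp [initTree]
  · intro x hx
    simp_all [initTree, mem_labelClosure_self]
  · simp [initTree]
  · intro x hx
    rw [(hnodes x).mp hx, show (0 : ℕ) = (initTree D).root from rfl, CTree.depth_root]
    exact Nat.zero_le _
  · simp
  · simp
  · intro x
    simp only [Finset.sum_empty, Nat.le_zero, Finset.card_eq_zero, CTree.children,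
      Finset.filter_eq_empty_iff]
    intro z hz
    simp [(hnodes z).mp hz, initTree]

namespace IsGuided

variable {Rp : Set ℕ} {RIA : List (Role × Role)} {D : DLConcept} {T : Tableau Rp RIA D}
  {t t' : CTree} {π : ℕ → T.S} {gen : ℕ → Finset DLConcept}

lemma rNeighb_mem_E (I : IsGuided T t π gen) {S : Role} {x y : ℕ} (hx : x ∈ t.nodes)
    (h : t.RNeighb RIA S x y) : (π x, π y) ∈ T.E S := by
  rcases h with ⟨⟨hy, hyr, rfl⟩, S₀, hS₀, hsub⟩ | ⟨⟨-, hxr, rfl⟩, S₀, hS₀, hsub⟩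
  · exact T.p8 S₀ S hsub _ _ (I.edge_mem_E y hy hyr S₀ hS₀)
  · simpa using (T.p7 S.Inv _ _).mp (T.p8 S₀ S.Inv hsub _ _ (I.edge_mem_E x hx hxr S₀ hS₀))

lemma not_clash (I : IsGuided T t π gen) : ¬ t.Clash RIA := by
  rintro ⟨x, hx, ⟨A, hA, hnA⟩ | ⟨n, S, C, hC, ys, hys, hneq⟩⟩
  · exact T.p1 (π x) _ (I.lab_mem_L x hx _ hA) (I.lab_mem_L x hx _ hnA)
  · let f : Fin (n + 1) → {s // (π x, s) ∈ T.E S ∧ C ∈ T.L s} := fun i =>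
      ⟨π (ys i), I.rNeighb_mem_E hx (hys i).1, I.lab_mem_L _ ((hys i).1.mem hx) _ (hys i).2⟩
    have hf : f.Injective := fun i j hij => by
      by_contra hne
      exact (I.neq_imp _ _ (hneq i j hne)).2.2 (congrArg Subtype.val hij)
    have := (Cardinal.mk_le_of_injective hf).trans (T.p9 (π x) n S C (I.lab_mem_L x hx _ hC))
    simp at this

lemma depth_le_depthBound_of_not_blocked (I : IsGuided T t π gen) {x : ℕ} (hx : x ∈ t.nodes)
    (hnb : ¬ t.Blocked x) : t.depth x ≤ depthBound D RIA :=
  CTree.depth_le_of_not_blocked I.parent_root I.lab_subset I.elb_subset hx hnb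

lemma card_level_le (I : IsGuided T t π gen) (d : ℕ) :
    {x ∈ t.nodes | t.depth x = d}.card ≤ (∑ C ∈ labelClosure D RIA, succBound C) ^ d := by
  induction d with
  | zero =>
    refine (Finset.card_le_card fun x hx => ?_).trans (Finset.card_singleton t.root).le
    rw [Finset.mem_filter] at hx
    simpa [hx.2] using CTree.depth_spec hx.1
  | succ d ih =>
    have hroot : ∀ x ∈ {x ∈ t.nodes | t.depth x = d + 1}, x ≠ t.root := by
      intro x hx h
      simp [h, CTree.depth_root] at hx
    calc {x ∈ t.nodes | t.depth x = d + 1}.card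
        ≤ (∑ C ∈ labelClosure D RIA, succBound C) * {x ∈ t.nodes | t.depth x = d}.card := by
          refine Finset.card_le_mul_card_image_of_maps_to (f := t.parent) (fun x hx => ?_) _
            fun y _ => ?_
          · have hxr := hroot x hx
            simp only [Finset.mem_filter] at hx ⊢
            exact ⟨t.parent_mem x hx.1 hxr, by have := CTree.depth_parent hx.1 hxr; omega⟩
          · refine (Finset.card_le_card fun x hx => ?_).trans
              ((I.card_children_le y).trans (Finset.sum_le_sum_of_subset (I.gen_subset y)))
            have hxr := hroot x (Finset.mem_filter.mp hx).1
            simp only [Finset.mem_filter] at hx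
            exact Finset.mem_filter.mpr ⟨hx.1.1, hxr, hx.2⟩
      _ ≤ _ := by rw [pow_succ, mul_comm]; exact Nat.mul_le_mul_right _ ih

lemma card_nodes_le (I : IsGuided T t π gen) : t.nodes.card ≤ nodeBound D RIA := by
  rw [Finset.card_eq_sum_card_fiberwise (f := t.depth) (t := Finset.range (depthBound D RIA + 2))
    fun x hx => by simpa [Nat.lt_succ_iff] using I.depth_le x hx]
  exact Finset.sum_le_sum fun d _ => I.card_level_le d

lemma weight_le (I : IsGuided T t π gen) : t.weight ≤ weightBound D RIA := by
  have hN := I.card_nodes_le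
  have hE : t.emptied.card ≤ t.nodes.card := Finset.card_filter_le _ _
  have hL : ∑ x ∈ t.nodes, (t.lab x).card ≤ t.nodes.card * (labelClosure D RIA).card :=
    Finset.sum_le_card_nsmul _ _ _ fun x hx => Finset.card_le_card (I.lab_subset x hx)
  have := Nat.mul_le_mul_right (labelClosure D RIA).card hN
  unfold CTree.weight weightBound
  omega

lemma updateLab (I : IsGuided T t π gen) {w : ℕ} {L : Finset DLConcept} (hL : t.lab w ⊆ L)
    (hK : L ⊆ labelClosure D RIA) (hT : ∀ C ∈ L, C ∈ T.L (π w)) :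
    IsGuided T (t.updateLab w L) π gen where
  lab_mem_L x hx := by
    rcases eq_or_ne x w with rfl | hxw
    · simpa [CTree.updateLab] using hT
    · simpa [CTree.updateLab, hxw] using I.lab_mem_L x hx
  edge_mem_E := I.edge_mem_E
  neq_imp := I.neq_imp
  lab_subset x hx := by
    rcases eq_or_ne x w with rfl | hxw
    · simpa [CTree.updateLab] using hK
    · simpa [CTree.updateLab, hxw] using I.lab_subset x hx
  elb_subset := I.elb_subset
  parent_root := I.parent_root
  depth_le := I.depth_le
  gen_subset := I.gen_subset
  gen_eq_empty := I.gen_eq_empty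
  witnessed x hx hee C hC :=
    (CTree.extends_updateLab hL).witnessed hx (I.witnessed x hx hee C hC)
  card_children_le := I.card_children_le

lemma updateLab_insert (I : IsGuided T t π gen) {w : ℕ} {C : DLConcept} (hw : w ∈ t.nodes)
    (hC : C ∉ t.lab w) (hK : C ∈ labelClosure D RIA) (hT : C ∈ T.L (π w)) :
    IsGuided T (t.updateLab w (insert C (t.lab w))) π gen ∧
      t.weight < (t.updateLab w (insert C (t.lab w))).weight :=
  ⟨I.updateLab (Finset.subset_insert _ _) (Finset.insert_subset hK (I.lab_subset w hw))
    (Finset.forall_mem_insert _ _ _ |>.mpr ⟨hT, I.lab_mem_L w hw⟩),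
    CTree.weight_lt_updateLab hw (Finset.ssubset_insert hC)⟩

lemma addSuccs (I : IsGuided T t π gen) {x n : ℕ} {ys : Fin n → ℕ} {C G : DLConcept}
    {S : Role} (h : t.AddsSuccs t' x ys C S) (hx : x ∈ t.nodes) (hnb : ¬ t.Blocked x)
    (hG : G ∈ t.lab x) (hGw : ¬ Witnessed RIA t x G) (hGn : succBound G = n)
    (hGw' : (∀ i, t'.RNeighb RIA S x (ys i) ∧ C ∈ t'.lab (ys i)) → Witnessed RIA t' x G)
    (hC : C ∈ labelClosure D RIA) (hS : S ∈ RD D RIA)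
    (g : Fin n → T.S) (hg : Function.Injective g) (hgE : ∀ i, (π x, g i) ∈ T.E S)
    (hgL : ∀ i, C ∈ T.L (g i)) :
    IsGuided T t' (Function.extend ys g π) (Function.update gen x (insert G (gen x))) where
  lab_mem_L z hz D' hD' := by
    rcases h.mem_nodes_iff.mp hz with hz | ⟨i, rfl⟩
    · rw [h.lab_old z hz] at hD'
      rw [h.extend_apply_old g π hz]
      exact I.lab_mem_L z hz D' hD'
    · rw [h.lab_new i, Finset.mem_singleton] at hD'
      rw [h.injective.extend_apply, hD']
      exact hgL i
  edge_mem_E z hz hzr S' hS' := by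
    rcases h.mem_nodes_iff.mp hz with hz | ⟨i, rfl⟩
    · rw [h.elb_old z hz] at hS'
      rw [h.root_eq] at hzr
      rw [h.parent_old z hz, h.extend_apply_old g π hz,
        h.extend_apply_old g π (t.parent_mem z hz hzr)]
      exact I.edge_mem_E z hz hzr S' hS'
    · rw [h.elb_new i, Finset.mem_singleton] at hS'
      rw [h.parent_new i, h.injective.extend_apply, h.extend_apply_old g π hx, hS']
      exact hgE i
  neq_imp u v huv := by
    rcases (h.neq_iff u v).mp huv with huv | ⟨i, j, hij, rfl, rfl⟩
    · obtain ⟨hu, hv, hne⟩ := I.neq_imp u v huv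
      exact ⟨h.toExtends.nodes_subset hu, h.toExtends.nodes_subset hv, by
        rwa [h.extend_apply_old g π hu, h.extend_apply_old g π hv]⟩
    · refine ⟨h.mem_nodes_iff.mpr (Or.inr ⟨i, rfl⟩), h.mem_nodes_iff.mpr (Or.inr ⟨j, rfl⟩), ?_⟩
      rw [h.injective.extend_apply, h.injective.extend_apply]
      exact hg.ne hij
  lab_subset z hz := by
    rcases h.mem_nodes_iff.mp hz with hz | ⟨i, rfl⟩
    · rw [h.lab_old z hz]; exact I.lab_subset z hz
    · rw [h.lab_new i]; exact Finset.singleton_subset_iff.mpr hC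
  elb_subset z hz := by
    rcases h.mem_nodes_iff.mp hz with hz | ⟨i, rfl⟩
    · rw [h.elb_old z hz]; exact I.elb_subset z hz
    · rw [h.elb_new i]; exact Finset.singleton_subset_iff.mpr hS
  parent_root := by rw [h.root_eq, h.parent_old _ t.root_mem, I.parent_root]
  depth_le z hz := by
    have hdepth : ∀ w ∈ t.nodes, t'.depth w = t.depth w := fun w hw =>
      CTree.depth_eq_of_parent_eqOn I.parent_root h.parent_old h.root_eq hw
    rcases h.mem_nodes_iff.mp hz with hz | ⟨i, rfl⟩
    · rw [hdepth z hz]; exact I.depth_le z hz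
    · rw [CTree.depth_parent hz (h.ne_root i), h.parent_new i, hdepth x hx]
      exact Nat.add_le_add_right (I.depth_le_depthBound_of_not_blocked hx hnb) 1
  gen_subset z := by
    rcases eq_or_ne z x with rfl | hzx
    · simpa using Finset.insert_subset (I.lab_subset z hx hG) (I.gen_subset z)
    · simpa [hzx] using I.gen_subset z
  gen_eq_empty z hz := by
    have hz' : z ∉ t.nodes := fun h' => hz (h.toExtends.nodes_subset h')
    rw [Function.update_of_ne (fun hzx : z = x => hz' (hzx ▸ hx))]
    exact I.gen_eq_empty z hz'
  witnessed z hz hee D' hD' := by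
    rcases h.mem_nodes_iff.mp hz with hz | ⟨i, rfl⟩
    · have hold : D' ∈ gen z → Witnessed RIA t' z D' := fun hD =>
        h.toExtends.witnessed hz (I.witnessed z hz (h.toExtends.not_emptyEdge hz hee) D' hD)
      rcases eq_or_ne z x with rfl | hzx
      · rcases Finset.mem_insert.mp (by simpa using hD') with rfl | hD
        · exact hGw' fun i => ⟨h.rNeighb i, by simp [h.lab_new i]⟩
        · exact hold hD
      · exact hold (by simpa [hzx] using hD')
    · have hix : ys i ≠ x := fun hi => h.fresh i (hi ▸ hx)
      simp [hix, I.gen_eq_empty _ (h.fresh i)] at hD'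
  card_children_le w := by
    refine (h.card_children_le w).trans ?_
    rcases eq_or_ne w x with rfl | hwx
    · have hGgen : G ∉ gen w := fun hGx =>
        hGw (I.witnessed w hx (fun he => hnb ⟨w, Or.inl rfl, Or.inr he⟩) G hGx)
      simp [Finset.sum_insert hGgen, hGn, I.card_children_le w, add_comm]
    · simpa [hwx] using I.card_children_le w

lemma merge (I : IsGuided T t π gen) {x y z w : ℕ} {E : Finset Role}
    (hy : t.Succ x y) (hyE : t.elb y ≠ ∅) (hz : z ∈ t.nodes) (hπ : π y = π z)
    (hwy : w ≠ y) (hwE : t.elb w ≠ ∅) (hER : E ⊆ RD D RIA)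
    (hEE : ∀ S ∈ E, (π (t.parent w), π w) ∈ T.E S)
    (hxz : ∀ S S₀, S₀ ∈ t.elb y → SubRole RIA S₀ S → (t.merge y z w E).RNeighb RIA S x z) :
    IsGuided T (t.merge y z w E) π gen where
  lab_mem_L v hv C hC := by
    rcases eq_or_ne v z with rfl | hvz
    · simp only [CTree.merge, Function.update_self, Finset.mem_union] at hC
      rcases hC with hC | hC
      exacts [I.lab_mem_L v hv C hC, hπ ▸ I.lab_mem_L y hy.1 C hC]
    · simp only [CTree.merge, Function.update_of_ne hvz] at hC
      exact I.lab_mem_L v hv C hC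
  edge_mem_E v hv hvr S hS := by
    rcases eq_or_ne v y with rfl | hvy
    · simp [CTree.merge] at hS
    rcases eq_or_ne v w with rfl | hvw
    · simp only [CTree.merge, Function.update_of_ne hvy, Function.update_self,
        Finset.mem_union] at hS
      rcases hS with hS | hS
      exacts [I.edge_mem_E v hv hvr S hS, hEE S hS]
    · simp only [CTree.merge, Function.update_of_ne hvy, Function.update_of_ne hvw] at hS
      exact I.edge_mem_E v hv hvr S hS
  neq_imp u v huv := by
    rcases huv with huv | ⟨huy, rfl⟩ | ⟨rfl, hvy⟩
    · exact I.neq_imp u v huv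
    · obtain ⟨hu, -, hne⟩ := I.neq_imp u y huy
      exact ⟨hu, hz, hπ ▸ hne⟩
    · obtain ⟨hv, -, hne⟩ := I.neq_imp v y hvy
      exact ⟨hz, hv, hπ ▸ hne.symm⟩
  lab_subset v hv := by
    rcases eq_or_ne v z with rfl | hvz
    · simpa [CTree.merge] using Finset.union_subset (I.lab_subset v hv) (I.lab_subset y hy.1)
    · simpa [CTree.merge, hvz] using I.lab_subset v hv
  elb_subset v hv := by
    rcases eq_or_ne v y with rfl | hvy
    · simp [CTree.merge]
    rcases eq_or_ne v w with rfl | hvw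
    · simpa [CTree.merge, hvy] using Finset.union_subset (I.elb_subset v hv) hER
    · simpa [CTree.merge, hvy, hvw] using I.elb_subset v hv
  parent_root := I.parent_root
  depth_le := I.depth_le
  gen_subset := I.gen_subset
  gen_eq_empty := I.gen_eq_empty
  witnessed v hv hee C hC := by
    have hvy : v ≠ y := fun h => hee ⟨h ▸ hy.1, h ▸ hy.2.1, by simp [CTree.merge, h]⟩
    have hee' : ¬ t.EmptyEdge v := fun ⟨_, hvr, he⟩ => by
      rcases eq_or_ne v w with rfl | hvw
      · exact hwE he
      · exact hee ⟨hv, hvr, by simp [CTree.merge, hvy, hvw, he]⟩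
    exact CTree.witnessed_merge hy.2.2 (fun h => (I.neq_imp y y h).2.2 rfl) hxz hvy
      (I.witnessed v hv hee' C hC)
  card_children_le := I.card_children_le

/-! ### Guided rule applications -/

/-- When the ≤-rule applies, P9 and pigeonhole give two neighbours with the same image, at most
one of which is the predecessor. -/
lemma exists_merge_pair (I : IsGuided T t π gen) {x n : ℕ} {S : Role} {C : DLConcept}
    (hx : x ∈ t.nodes) (hC : DLConcept.atmost n S C ∈ t.lab x)
    (hcount : n < {w | t.RNeighb RIA S x w ∧ C ∈ t.lab w}.ncard) :
    ∃ y z, y ≠ z ∧ π y = π z ∧ ¬ t.Anc y x ∧ (t.RNeighb RIA S x y ∧ C ∈ t.lab y) ∧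
      (t.RNeighb RIA S x z ∧ C ∈ t.lab z) := by
  obtain ⟨hfin, hcard⟩ := Set.finite_and_ncard_le_of_mk_le
    (s := {s | (π x, s) ∈ T.E S ∧ C ∈ T.L s}) (T.p9 (π x) n S C (I.lab_mem_L x hx _ hC))
  obtain ⟨a, ha, b, hb, hab, hπ⟩ := Set.exists_ne_map_eq_of_ncard_lt_of_maps_to
    (hcard.trans_lt hcount) (f := π)
    (fun w hw => ⟨I.rNeighb_mem_E hx hw.1, I.lab_mem_L w (hw.1.mem hx) C hw.2⟩) hfin
  by_cases hax : t.Anc a x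
  · refine ⟨b, a, hab.symm, hπ.symm, fun hbx => hab ?_, hb, ha⟩
    rw [← ha.1.parent_eq_of_anc hax, hb.1.parent_eq_of_anc hbx]
  · exact ⟨a, b, hab, hπ, hax, ha, hb⟩

section Leq

variable (I : IsGuided T t π gen) {x y z n : ℕ} {S : Role} {C : DLConcept}
  (hx : x ∈ t.nodes) (hC : DLConcept.atmost n S C ∈ t.lab x) (hnib : ¬ t.IndirectlyBlocked x)
  (hcount : n < {w | t.RNeighb RIA S x w ∧ C ∈ t.lab w}.ncard)
  (hy : t.RNeighb RIA S x y ∧ C ∈ t.lab y) (hz : t.RNeighb RIA S x z ∧ C ∈ t.lab z)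
  (hyz : y ≠ z) (hπ : π y = π z) (hyx : ¬ t.Anc y x)
include I hx hC hnib hcount hy hz hyz hπ hyx

lemma exists_step_leqAnc (hzx : t.Anc z x) :
    ∃ t', Step Rp RIA t t' ∧ IsGuided T t' π gen ∧ t.weight < t'.weight := by
  obtain ⟨hys, S₁, hS₁, -⟩ := hy.1.rSucc_of_not_anc hyx
  have hyE : t.elb y ≠ ∅ := Finset.ne_empty_of_mem hS₁
  have hpx := hz.1.parent_eq_of_anc hzx
  have hxE : t.elb x ≠ ∅ := fun h => hnib (Or.inr ⟨hx, hzx.ne_root, h⟩)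
  have hxy : x ≠ y := hys.ne
  refine ⟨t.merge y z x ((t.elb y).image Role.Inv), Step.leqAnc t _ x y z n S C hx hC hnib
    hcount hy.1 hz.1 hy.2 hz.2 hyz (fun h => (I.neq_imp y z h).2.2 hπ) hyx hzx rfl rfl rfl
    (by simp [CTree.merge]) (fun w hw => by simp [CTree.merge, hw]) (by simp [CTree.merge, hxy])
    (by simp [CTree.merge]) (fun w hwx hwy => by simp [CTree.merge, hwx, hwy])
    (fun _ _ => Iff.rfl), I.merge hys hyE (hz.1.mem hx) hπ hxy hxE ?_ ?_ ?_,
    CTree.weight_lt_merge hys.1 hys.2.1 hyE hxE⟩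
  · intro S' hS'
    obtain ⟨S₀, hS₀, rfl⟩ := Finset.mem_image.mp hS'
    exact Inv_mem_RD (I.elb_subset y hys.1 hS₀)
  · intro S' hS'
    obtain ⟨S₀, hS₀, rfl⟩ := Finset.mem_image.mp hS'
    rw [hpx, ← hπ]
    exact (T.p7 S₀ _ _).mp (hys.2.2 ▸ I.edge_mem_E y hys.1 hys.2.1 S₀ hS₀)
  · intro S' S₀ hS₀ hsub
    refine Or.inr ⟨⟨hx, hzx.ne_root, hpx⟩, S₀.Inv, ?_, hsub.inv⟩
    simp only [CTree.merge, Function.update_of_ne hxy, Function.update_self]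
    exact Finset.mem_union_right _ (Finset.mem_image_of_mem _ hS₀)

lemma exists_step_leqSucc (hzx : ¬ t.Anc z x) :
    ∃ t', Step Rp RIA t t' ∧ IsGuided T t' π gen ∧ t.weight < t'.weight := by
  obtain ⟨hys, S₁, hS₁, -⟩ := hy.1.rSucc_of_not_anc hyx
  have hyE : t.elb y ≠ ∅ := Finset.ne_empty_of_mem hS₁
  obtain ⟨hzs, S₂, hS₂, -⟩ := hz.1.rSucc_of_not_anc hzx
  have hzE : t.elb z ≠ ∅ := Finset.ne_empty_of_mem hS₂
  refine ⟨t.merge y z z (t.elb y), Step.leqSucc t _ x y z n S C hx hC hnib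
    hcount hy.1 hz.1 hy.2 hz.2 hyz (fun h => (I.neq_imp y z h).2.2 hπ) hyx hzx rfl rfl rfl
    (by simp [CTree.merge]) (fun w hw => by simp [CTree.merge, hw])
    (by simp [CTree.merge, hyz.symm]) (by simp [CTree.merge])
    (fun w hwz hwy => by simp [CTree.merge, hwz, hwy]) (fun _ _ => Iff.rfl),
    I.merge hys hyE (hz.1.mem hx) hπ hyz.symm hzE (I.elb_subset y hys.1) ?_ ?_,
    CTree.weight_lt_merge hys.1 hys.2.1 hyE hzE⟩
  · intro S' hS'
    rw [hzs.2.2, ← hπ, ← hys.2.2]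
    exact I.edge_mem_E y hys.1 hys.2.1 S' hS'
  · intro S' S₀ hS₀ hsub
    exact Or.inl ⟨hzs, S₀, by simp [CTree.merge, hyz.symm, hS₀], hsub⟩

end Leq

lemma exists_step_leq (I : IsGuided T t π gen) {x n : ℕ} {S : Role} {C : DLConcept}
    (hx : x ∈ t.nodes) (hC : DLConcept.atmost n S C ∈ t.lab x)
    (hnib : ¬ t.IndirectlyBlocked x)
    (hcount : n < {w | t.RNeighb RIA S x w ∧ C ∈ t.lab w}.ncard) :
    ∃ t', Step Rp RIA t t' ∧ IsGuided T t' π gen ∧ t.weight < t'.weight := by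
  obtain ⟨y, z, hyz, hπ, hyx, hy, hz⟩ := I.exists_merge_pair hx hC hcount
  by_cases hzx : t.Anc z x
  · exact I.exists_step_leqAnc hx hC hnib hcount hy hz hyz hπ hyx hzx
  · exact I.exists_step_leqSucc hx hC hnib hcount hy hz hyz hπ hyx hzx

lemma exists_guide_of_step_exists (I : IsGuided T t π gen) {x y : ℕ} {S : Role} {C : DLConcept}
    (hx : x ∈ t.nodes) (hC : DLConcept.ex S C ∈ t.lab x) (hnb : ¬ t.Blocked x)
    (hnew : ¬ ∃ z, t.RNeighb RIA S x z ∧ C ∈ t.lab z) (hy : y ∉ t.nodes)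
    (hn : t'.nodes = insert y t.nodes) (hr : t'.root = t.root)
    (hp : t'.parent = Function.update t.parent y x)
    (hl : t'.lab = Function.update t.lab y {C})
    (he : t'.elb = Function.update t.elb y {S}) (hq : t'.neq = t.neq) :
    ∃ π' gen', IsGuided T t' π' gen' ∧ t.weight < t'.weight := by
  have hold : ∀ z ∈ t.nodes, z ≠ y := fun z hz h => hy (h ▸ hz)
  have hadd : t.AddsSuccs t' x (fun _ : Fin 1 => y) C S :=
    { injective := fun _ _ _ => Subsingleton.elim _ _
      fresh := fun _ => hy
      nodes_eq := by ext; simp [hn]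
      root_eq := hr
      parent_new := fun _ => by simp [hp]
      parent_old := fun z hz => by simp [hp, hold z hz]
      lab_new := fun _ => by simp [hl]
      lab_old := fun z hz => by simp [hl, hold z hz]
      elb_new := fun _ => by simp [he]
      elb_old := fun z hz => by simp [he, hold z hz]
      neq_iff := fun u v => by simp [hq] }
  have hK := I.lab_subset x hx hC
  obtain ⟨s, hsE, hsC⟩ := T.p5 (π x) S C (I.lab_mem_L x hx _ hC)
  exact ⟨_, _, I.addSuccs hadd hx hnb hC hnew rfl (fun h => ⟨y, h 0⟩)
    ((DirectSub.ex S C).mem_labelClosure hK) (rolesOf_subset_RD hK (by simp [DLConcept.rolesOf]))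
    (fun _ => s) (fun _ _ _ => Subsingleton.elim _ _) (fun _ => hsE) (fun _ => hsC),
    hadd.weight_lt Nat.one_pos⟩

lemma exists_guide_of_step_geq (I : IsGuided T t π gen) {x n : ℕ} {S : Role} {C : DLConcept}
    {ys : Fin n → ℕ} (hx : x ∈ t.nodes) (hC : DLConcept.atleast n S C ∈ t.lab x)
    (hnb : ¬ t.Blocked x)
    (hnew : ¬ ∃ zs : Fin n → ℕ, (∀ i, t.RNeighb RIA S x (zs i) ∧ C ∈ t.lab (zs i)) ∧
      ∀ i j, i ≠ j → t.neq (zs i) (zs j))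
    (hinj : Function.Injective ys) (hfresh : ∀ i, ys i ∉ t.nodes)
    (hn : t'.nodes = t.nodes ∪ Finset.image ys Finset.univ) (hr : t'.root = t.root)
    (hp1 : ∀ i, t'.parent (ys i) = x) (hp2 : ∀ z, (∀ i, z ≠ ys i) → t'.parent z = t.parent z)
    (hl1 : ∀ i, t'.lab (ys i) = {C}) (hl2 : ∀ z, (∀ i, z ≠ ys i) → t'.lab z = t.lab z)
    (he1 : ∀ i, t'.elb (ys i) = {S}) (he2 : ∀ z, (∀ i, z ≠ ys i) → t'.elb z = t.elb z)
    (hq : ∀ u v, t'.neq u v ↔ (t.neq u v ∨ ∃ i j, i ≠ j ∧ u = ys i ∧ v = ys j)) :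
    ∃ π' gen', IsGuided T t' π' gen' ∧ t.weight < t'.weight := by
  have hold : ∀ z ∈ t.nodes, ∀ i, z ≠ ys i := fun z hz i h => hfresh i (h ▸ hz)
  have hadd : t.AddsSuccs t' x ys C S :=
    ⟨hinj, hfresh, hn, hr, hp1, fun z hz => hp2 z (hold z hz), hl1,
      fun z hz => hl2 z (hold z hz), he1, fun z hz => he2 z (hold z hz), hq⟩
  have hK := I.lab_subset x hx hC
  have hcard := T.p10 (π x) n S C (I.lab_mem_L x hx _ hC)
  rw [← Cardinal.mk_fin n] at hcard
  obtain ⟨g⟩ := (Cardinal.le_def _ _).mp hcard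
  exact ⟨_, _, I.addSuccs hadd hx hnb hC hnew rfl
    (fun h => ⟨ys, h, fun i j hij => (hq _ _).mpr (Or.inr ⟨i, j, hij, rfl, rfl⟩)⟩)
    (mem_labelClosure_of_numRestr (Or.inl hK)).1
    (rolesOf_subset_RD hK (by simp [DLConcept.rolesOf])) (fun i => (g i).1)
    (fun i j h => g.injective (Subtype.ext h)) (fun i => (g i).2.1) (fun i => (g i).2.2),
    hadd.weight_lt (succBound_pos_of_not_witnessed (G := .atleast n S C) hnew)⟩

lemma exists_step_conj (I : IsGuided T t π gen) {x : ℕ} {C₁ C₂ : DLConcept}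
    (hx : x ∈ t.nodes) (hC : DLConcept.and C₁ C₂ ∈ t.lab x) (hnib : ¬ t.IndirectlyBlocked x)
    (hnew : ¬ ({C₁, C₂} ⊆ t.lab x)) :
    ∃ t', Step Rp RIA t t' ∧ IsGuided T t' π gen ∧ t.weight < t'.weight := by
  have hK := I.lab_subset x hx hC
  have hT := T.p2 _ _ _ (I.lab_mem_L x hx _ hC)
  refine ⟨_, .conj t (t.updateLab _ _) x C₁ C₂ hx hC hnib hnew rfl rfl rfl rfl rfl rfl,
    I.updateLab Finset.subset_union_left (Finset.union_subset (I.lab_subset x hx) ?_) ?_,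
    CTree.weight_lt_updateLab hx
      ⟨Finset.subset_union_left, fun h => hnew (Finset.subset_union_right.trans h)⟩⟩
  · simp [Finset.insert_subset_iff, (DirectSub.andl C₁ C₂).mem_labelClosure hK,
      (DirectSub.andr C₁ C₂).mem_labelClosure hK]
  · simpa [or_imp, forall_and, hT] using I.lab_mem_L x hx

lemma exists_step_disj (I : IsGuided T t π gen) {x : ℕ} {C₁ C₂ : DLConcept}
    (hx : x ∈ t.nodes) (hC : DLConcept.or C₁ C₂ ∈ t.lab x) (hnib : ¬ t.IndirectlyBlocked x)
    (hnew : C₁ ∉ t.lab x ∧ C₂ ∉ t.lab x) :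
    ∃ t', Step Rp RIA t t' ∧ IsGuided T t' π gen ∧ t.weight < t'.weight := by
  have hK := I.lab_subset x hx hC
  obtain ⟨E, hE, hEK, hET, hEnew⟩ : ∃ E, (E = C₁ ∨ E = C₂) ∧ E ∈ labelClosure D RIA ∧
      E ∈ T.L (π x) ∧ E ∉ t.lab x := by
    rcases T.p3 _ _ _ (I.lab_mem_L x hx _ hC) with h | h
    · exact ⟨C₁, Or.inl rfl, (DirectSub.orl C₁ C₂).mem_labelClosure hK, h, hnew.1⟩
    · exact ⟨C₂, Or.inr rfl, (DirectSub.orr C₁ C₂).mem_labelClosure hK, h, hnew.2⟩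
  exact ⟨_, .disj t (t.updateLab _ _) x C₁ C₂ E hx hC hnib hnew hE rfl rfl rfl rfl rfl rfl,
    I.updateLab_insert hx hEnew hEK hET⟩

lemma exists_step_all (I : IsGuided T t π gen) {x y : ℕ} {S : Role} {C : DLConcept}
    (hx : x ∈ t.nodes) (hC : DLConcept.all S C ∈ t.lab x) (hnib : ¬ t.IndirectlyBlocked x)
    (hng : t.RNeighb RIA S x y) (hnew : C ∉ t.lab y) :
    ∃ t', Step Rp RIA t t' ∧ IsGuided T t' π gen ∧ t.weight < t'.weight :=
  ⟨_, .all t (t.updateLab _ _) x y S C hx hC hnib hng hnew rfl rfl rfl rfl rfl rfl,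
    I.updateLab_insert (hng.mem hx) hnew
      ((DirectSub.all S C).mem_labelClosure (I.lab_subset x hx hC))
      (T.p4 _ _ S C (I.lab_mem_L x hx _ hC) (I.rNeighb_mem_E hx hng))⟩

lemma exists_step_allTrans (I : IsGuided T t π gen) {x y : ℕ} {R S : Role} {C : DLConcept}
    (hx : x ∈ t.nodes) (hC : DLConcept.all S C ∈ t.lab x) (hnib : ¬ t.IndirectlyBlocked x)
    (htr : RTrans Rp R) (hsub : SubRole RIA R S) (hng : t.RNeighb RIA R x y)
    (hnew : DLConcept.all R C ∉ t.lab y) :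
    ∃ t', Step Rp RIA t t' ∧ IsGuided T t' π gen ∧ t.weight < t'.weight := by
  have hK := I.lab_subset x hx hC
  have hR : R ∈ RD D RIA := by
    rcases hsub.eq_or_mem_RD (D := D) with rfl | h
    exacts [rolesOf_subset_RD hK (by simp [DLConcept.rolesOf]), h]
  exact ⟨_, .allTrans t (t.updateLab _ _) x y R S C hx hC hnib htr hsub hng hnew rfl rfl rfl rfl
    rfl rfl, I.updateLab_insert (hng.mem hx) hnew (all_mem_labelClosure hK hR)
      (T.p6 _ _ R S C (I.lab_mem_L x hx _ hC) hsub htr (I.rNeighb_mem_E hx hng))⟩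

lemma exists_step_choose (I : IsGuided T t π gen) {x y n : ℕ} {S : Role} {C : DLConcept}
    (hx : x ∈ t.nodes)
    (hC : DLConcept.atleast n S C ∈ t.lab x ∨ DLConcept.atmost n S C ∈ t.lab x)
    (hnib : ¬ t.IndirectlyBlocked x) (hng : t.RNeighb RIA S x y)
    (hnew : C ∉ t.lab y ∧ C.nnfNeg ∉ t.lab y) :
    ∃ t', Step Rp RIA t t' ∧ IsGuided T t' π gen ∧ t.weight < t'.weight := by
  have hK := mem_labelClosure_of_numRestr (hC.imp (I.lab_subset x hx ·) (I.lab_subset x hx ·))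
  obtain ⟨E, hE, hEK, hET, hEnew⟩ : ∃ E, (E = C ∨ E = C.nnfNeg) ∧ E ∈ labelClosure D RIA ∧
      E ∈ T.L (π y) ∧ E ∉ t.lab y := by
    rcases T.p11 _ _ n S C (hC.imp (I.lab_mem_L x hx _ ·) (I.lab_mem_L x hx _ ·))
      (I.rNeighb_mem_E hx hng) with h | h
    · exact ⟨C, Or.inl rfl, hK.1, h, hnew.1⟩
    · exact ⟨C.nnfNeg, Or.inr rfl, hK.2, h, hnew.2⟩
  exact ⟨_, .choose t (t.updateLab _ _) x y n S C E hx hC hnib hng hnew hE rfl rfl rfl rfl rfl rfl,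
    I.updateLab_insert (hng.mem hx) hEnew hEK hET⟩

lemma exists_step (I : IsGuided T t π gen) {t₀ : CTree} (hstep : Step Rp RIA t t₀) :
    ∃ t' π' gen', Step Rp RIA t t' ∧ IsGuided T t' π' gen' ∧ t.weight < t'.weight := by
  cases hstep with
  | conj x C₁ C₂ hx hC hnib hnew =>
    obtain ⟨t', hs, hI, hw⟩ := I.exists_step_conj hx hC hnib hnew
    exact ⟨t', π, gen, hs, hI, hw⟩
  | disj x C₁ C₂ _ hx hC hnib hnew =>
    obtain ⟨t', hs, hI, hw⟩ := I.exists_step_disj hx hC hnib hnew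
    exact ⟨t', π, gen, hs, hI, hw⟩
  | all x y S C hx hC hnib hng hnew =>
    obtain ⟨t', hs, hI, hw⟩ := I.exists_step_all hx hC hnib hng hnew
    exact ⟨t', π, gen, hs, hI, hw⟩
  | allTrans x y R S C hx hC hnib htr hsub hng hnew =>
    obtain ⟨t', hs, hI, hw⟩ := I.exists_step_allTrans hx hC hnib htr hsub hng hnew
    exact ⟨t', π, gen, hs, hI, hw⟩
  | choose x y n S C _ hx hC hnib hng hnew =>
    obtain ⟨t', hs, hI, hw⟩ := I.exists_step_choose hx hC hnib hng hnew
    exact ⟨t', π, gen, hs, hI, hw⟩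
  | exists_ x y S C hx hC hnb hnew hy hn hr hp hl he hq =>
    obtain ⟨π', gen', hI, hw⟩ := I.exists_guide_of_step_exists hx hC hnb hnew hy hn hr hp hl he hq
    exact ⟨_, π', gen', .exists_ t _ x y S C hx hC hnb hnew hy hn hr hp hl he hq, hI, hw⟩
  | geq x n S C ys hx hC hnb hnew hinj hfresh hn hr hp1 hp2 hl1 hl2 he1 he2 hq =>
    obtain ⟨π', gen', hI, hw⟩ := I.exists_guide_of_step_geq hx hC hnb hnew hinj hfresh hn hr hp1 hp2
      hl1 hl2 he1 he2 hq
    exact ⟨_, π', gen', .geq t _ x n S C ys hx hC hnb hnew hinj hfresh hn hr hp1 hp2 hl1 hl2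
      he1 he2 hq, hI, hw⟩
  | leqSucc x _ _ n S C hx hC hnib hcount | leqAnc x _ _ n S C hx hC hnib hcount =>
    obtain ⟨t', hs, hI, hw⟩ := I.exists_step_leq hx hC hnib hcount
    exact ⟨t', π, gen, hs, hI, hw⟩

lemma exists_complete (I : IsGuided T t π gen) :
    ∃ t', Relation.ReflTransGen (Step Rp RIA) t t' ∧ Complete Rp RIA t' ∧ ¬ t'.Clash RIA := by
  induction hk : weightBound D RIA - t.weight using Nat.strong_induction_on
    generalizing t π gen with
  | _ k ih =>
    by_cases hc : Complete Rp RIA t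
    · exact ⟨t, .refl, hc, I.not_clash⟩
    obtain ⟨t₀, hstep⟩ := not_not.mp hc
    obtain ⟨t', π', gen', hs, I', hw⟩ := I.exists_step hstep
    obtain ⟨ts, hts, hc, hcl⟩ := ih _ (by have := I'.weight_le; omega) I' rfl
    exact ⟨ts, .head hs hts, hc, hcl⟩

end IsGuided

theorem shiq_algorithm_complete_general (Rp : Set ℕ) (RIA : List (Role × Role))
    (D : DLConcept)
    (h : Nonempty (Tableau Rp RIA D)) :
    ∃ t : CTree, Relation.ReflTransGen (Step Rp RIA) (initTree D) t ∧
      Complete Rp RIA t ∧ ¬ t.Clash RIA := by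
  obtain ⟨T⟩ := h
  obtain ⟨π, I⟩ := isGuided_initTree T
  exact I.exists_complete

/-- **Completeness.** If a SHIQ-concept `D` in NNF has a tableau
w.r.t. `R⁺`, then the expansion rules can be applied to the initial completion
tree for `D` so that they yield a complete and clash-free completion tree. -/
theorem shiq_algorithm_complete (Rp : Set ℕ) (RIA : List (Role × Role))
    (D : DLConcept) (hNNF : D.IsNNF) (hSHIQ : D.IsSHIQ Rp RIA)
    (h : Nonempty (Tableau Rp RIA D)) :
    ∃ t : CTree, Relation.ReflTransGen (Step Rp RIA) (initTree D) t ∧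
      Complete Rp RIA t ∧ ¬ t.Clash RIA :=
  shiq_algorithm_complete_general Rp RIA D h
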